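/- arXiv:1307.4530 — 6 statements merged into one kernel-verified Lean document; each statement's English description precedes it below -/
import Mathlib

section
/- Let A be a finite subset of ℤ, spectral with spectrum Γ, and let U_Γ(t) = F* D_Γ(t) F be the associated one-parameter family of unitary matrices. Then U_Γ(a−a') δ_a = δ_{a'} for all a, a' ∈ A; in particular B = U_Γ(1) is a local translation matrix for A. -/
/-!
Multiplying out, `U_Γ(t)_{b a} = (1/N) ∑_{γ ∈ Γ} e^{2πi(b - a + t)γ}`, so at `t = a - a'` the
spectral identity for the pair `(b, a')` says that column `a` of `U_Γ(a - a')` is `δ_{a'}`. The case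
`a = a'` gives `F* F = U_Γ(0) = 1`; as `F` is square also `F F* = 1`, so `t ↦ U_Γ(t)` is a
one-parameter group of unitaries and `B ^ n = U_Γ(n)` for every integer `n`.
-/


open Complex Real Matrix

noncomputable section

/-- `Γ ⊂ ℝ` is a spectrum for the finite set `A ⊂ ℤ`. -/
def IsSpectrumFor (A : Finset ℤ) (Γ : Finset ℝ) : Prop :=
  Γ.card = A.card ∧
  ∀ a ∈ A, ∀ a' ∈ A,
    ∑ γ ∈ Γ, Complex.exp (2 * Real.pi * Complex.I * (((a : ℤ) : ℂ) - ((a' : ℤ) : ℂ)) * (γ : ℂ)) =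
      if a = a' then (A.card : ℂ) else 0

/-- The Fourier matrix `F = (1/√N)(e^{−2πiλa})_{λ∈Γ, a∈A}`. -/
def Fmat (A : Finset ℤ) (Γ : Finset ℝ) : Matrix Γ A ℂ := fun γ a =>
  (1 / Real.sqrt A.card : ℝ) *
    Complex.exp (-(2 * Real.pi * Complex.I) * ((γ : ℝ) : ℂ) * ((a : ℤ) : ℂ))

/-- The diagonal matrix `D_Γ(t)` with entries `e^{2πiλt}`, `λ ∈ Γ`. -/
def Dmat (Γ : Finset ℝ) (t : ℝ) : Matrix Γ Γ ℂ :=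
  Matrix.diagonal fun γ => Complex.exp (2 * Real.pi * Complex.I * ((γ : ℝ) : ℂ) * (t : ℂ))

/-- The group of local translations `U_Γ(t) = F* D_Γ(t) F` associated to the spectrum `Γ`. -/
def Umat (A : Finset ℤ) (Γ : Finset ℝ) (t : ℝ) : Matrix A A ℂ :=
  (Fmat A Γ)ᴴ * Dmat Γ t * Fmat A Γ

section

variable {A : Finset ℤ} {Γ : Finset ℝ}

theorem star_Fmat_apply (γ : Γ) (a : A) :
    star (Fmat A Γ γ a) = (1 / Real.sqrt A.card : ℝ) *
      Complex.exp (2 * Real.pi * Complex.I * ((γ : ℝ) : ℂ) * ((a : ℤ) : ℂ)) := by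
  simp [Fmat, ← Complex.exp_conj, map_ofNat]

theorem Umat_apply (t : ℝ) (b a : A) :
    Umat A Γ t b a = (A.card : ℂ)⁻¹ *
      ∑ γ ∈ Γ, Complex.exp (2 * Real.pi * Complex.I * ((b - a : ℤ) + t) * γ) := by
  have hnorm : ((1 / Real.sqrt A.card : ℝ) : ℂ) * ((1 / Real.sqrt A.card : ℝ) : ℂ) =
      (A.card : ℂ)⁻¹ := by
    rw [← Complex.ofReal_mul, div_mul_div_comm, one_mul, Real.mul_self_sqrt (Nat.cast_nonneg _)]
    push_cast; ring
  rw [Umat, Matrix.mul_assoc, Matrix.mul_apply, Finset.mul_sum, ← Finset.sum_coe_sort Γ]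
  refine Finset.sum_congr rfl fun γ _ => ?_
  have hexp : Complex.exp (2 * Real.pi * Complex.I * ((b - a : ℤ) + t) * γ) =
      Complex.exp (2 * Real.pi * Complex.I * ((γ : ℝ) : ℂ) * ((b : ℤ) : ℂ)) *
      Complex.exp (2 * Real.pi * Complex.I * ((γ : ℝ) : ℂ) * t) *
      Complex.exp (-(2 * Real.pi * Complex.I) * ((γ : ℝ) : ℂ) * ((a : ℤ) : ℂ)) := by
    rw [← Complex.exp_add, ← Complex.exp_add]
    push_cast
    ring_nf
  rw [Matrix.conjTranspose_apply, star_Fmat_apply, Dmat, Matrix.diagonal_mul, Fmat, ← hnorm, hexp]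
  ring

theorem Umat_sub_mulVec_single (h : IsSpectrumFor A Γ) (a a' : A) :
    (Umat A Γ (((a : ℤ) : ℝ) - ((a' : ℤ) : ℝ))).mulVec (Pi.single a 1) = Pi.single a' 1 := by
  ext b
  have hshift : ∀ γ : ℝ, Complex.exp (2 * Real.pi * Complex.I *
        ((b - a : ℤ) + (((a : ℤ) : ℝ) - ((a' : ℤ) : ℝ) : ℝ)) * γ) =
      Complex.exp (2 * Real.pi * Complex.I * (((b : ℤ) : ℂ) - ((a' : ℤ) : ℂ)) * γ) := by
    intro γ
    push_cast
    ring_nf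
  have hcard : (A.card : ℂ) ≠ 0 := Nat.cast_ne_zero.2 (Finset.card_ne_zero_of_mem b.2)
  rw [Matrix.mulVec_single_one, Matrix.col_apply, Umat_apply]
  simp_rw [hshift, h.2 b b.2 a' a'.2, Pi.single_apply, Subtype.ext_iff]
  split_ifs <;> simp [hcard]

theorem Umat_zero (h : IsSpectrumFor A Γ) : Umat A Γ 0 = 1 := by
  ext b a
  simpa [Matrix.one_apply, Pi.single_apply] using congrFun (Umat_sub_mulVec_single h a a) b

theorem Dmat_zero : Dmat Γ 0 = 1 := by
  simp [Dmat]

theorem Dmat_add (s t : ℝ) : Dmat Γ (s + t) = Dmat Γ s * Dmat Γ t := by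
  rw [Dmat, Dmat, Dmat, Matrix.diagonal_mul_diagonal]
  congr 1
  ext γ
  rw [← Complex.exp_add]
  push_cast
  ring_nf

theorem Dmat_conjTranspose (t : ℝ) : (Dmat Γ t)ᴴ = Dmat Γ (-t) := by
  simp [Dmat, ← Complex.exp_conj, map_ofNat]

theorem Fmat_conjTranspose_mul_self (h : IsSpectrumFor A Γ) : (Fmat A Γ)ᴴ * Fmat A Γ = 1 := by
  simpa [Umat, Dmat_zero] using Umat_zero h

theorem Fmat_mul_conjTranspose_self (h : IsSpectrumFor A Γ) : Fmat A Γ * (Fmat A Γ)ᴴ = 1 :=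
  (Matrix.mul_eq_one_comm_of_equiv (Fintype.equivOfCardEq (by simpa using h.1))).2
    (Fmat_conjTranspose_mul_self h)

theorem Umat_add (h : IsSpectrumFor A Γ) (s t : ℝ) :
    Umat A Γ (s + t) = Umat A Γ s * Umat A Γ t := by
  simp only [Umat, Dmat_add, Matrix.mul_assoc]
  rw [← Matrix.mul_assoc (Fmat A Γ), Fmat_mul_conjTranspose_self h, Matrix.one_mul]

theorem Umat_conjTranspose (t : ℝ) : (Umat A Γ t)ᴴ = Umat A Γ (-t) := by
  simp [Umat, Matrix.conjTranspose_mul, Dmat_conjTranspose, Matrix.mul_assoc]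

theorem Umat_mem_unitaryGroup (h : IsSpectrumFor A Γ) (t : ℝ) :
    Umat A Γ t ∈ Matrix.unitaryGroup A ℂ := by
  rw [Matrix.mem_unitaryGroup_iff, Matrix.star_eq_conjTranspose, Umat_conjTranspose,
    ← Umat_add h, add_neg_cancel, Umat_zero h]

def localTranslationUnits (h : IsSpectrumFor A Γ) : AddChar ℝ (Matrix A A ℂ)ˣ where
  toFun t := ⟨Umat A Γ t, Umat A Γ (-t), by rw [← Umat_add h, add_neg_cancel, Umat_zero h],
    by rw [← Umat_add h, neg_add_cancel, Umat_zero h]⟩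
  map_zero_eq_one' := Units.ext (Umat_zero h)
  map_add_eq_mul' s t := Units.ext (Umat_add h s t)

theorem Umat_one_zpow (h : IsSpectrumFor A Γ) (n : ℤ) : Umat A Γ 1 ^ n = Umat A Γ n := by
  have := congrArg Units.val ((localTranslationUnits h).map_zsmul_eq_zpow n 1)
  rw [zsmul_one, Matrix.coe_units_zpow] at this
  exact this.symm

end

/-- if `Γ` is a spectrum for `A`, then `U_Γ(a−a') δ_a = δ_{a'}` for all
`a, a' ∈ A`; in particular `B = U_Γ(1)` is a local translation matrix for `A` (a unitary matrix
with `B^{a−a'} δ_a = δ_{a'}`). -/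
theorem Umat_is_group_of_local_translations (A : Finset ℤ) (Γ : Finset ℝ)
    (h : IsSpectrumFor A Γ) :
    (∀ a a' : A, (Umat A Γ (((a : ℤ) : ℝ) - ((a' : ℤ) : ℝ))).mulVec (Pi.single a 1) =
      Pi.single a' 1) ∧
    Umat A Γ 1 ∈ Matrix.unitaryGroup A ℂ ∧
    ∀ a a' : A, ((Umat A Γ 1) ^ ((a : ℤ) - (a' : ℤ))).mulVec (Pi.single a 1) =
      Pi.single a' 1 := by
  refine ⟨Umat_sub_mulVec_single h, Umat_mem_unitaryGroup h 1, fun a a' => ?_⟩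
  rw [Umat_one_zpow h, Int.cast_sub]
  exact Umat_sub_mulVec_single h a a'
end
end

section
/- Let A, L ⊂ ℤ with |A| = |L| = 4 and 0 ∈ A, 0 ∈ L, and let R ≥ 1 be an integer. Then (1/R)·L is a spectrum for A if and only if R = 2^{C+M+a+1}·d, A = 2^C·{0, 2^a c_1, c_2, c_2 + 2^a c_3}, and L = 2^M·{0, n_1, n_1 + 2^a n_2, 2^a n_3}, where c_1, c_2, c_3, n_1, n_2, n_3 are odd integers, a is a positive integer, C and M are nonnegative integers, and d divides c_1·n, c_3·n, n_2·c, and n_3·c, where c = gcd(c_1, c_2, c_3) and n = gcd(n_1, n_2, n_3). -/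
open Complex Real

noncomputable section

/-!
With `e(t) = exp (2πi t / R)` and `L = {0, u, v, w}`, orthogonality of the rows `b ≠ b'` of `A`
reads `1 + e(δu) + e(δv) + e(δw) = 0` with `δ = b - b'`. Four unimodular numbers summing to zero
cancel in pairs (compare the sum with its conjugate), so `L` splits as `{0, ℓ} ∪ {ℓ', ℓ''}` with
`e(δℓ) = e(δ(ℓ' - ℓ'')) = -1`: both `2δℓ` and `2δ(ℓ' - ℓ'')` are odd multiples of `R`. For
`R = 2^ρ D` with `D` odd this means `ν₂ δ + ν₂ ℓ + 1 = ρ = ν₂ δ + ν₂ (ℓ' - ℓ'') + 1`, together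
with `D ∣ δℓ` and `D ∣ δ(ℓ' - ℓ'')`.

Since two integers of equal 2-adic valuation differ by one of larger valuation, the balance
`ν₂ ℓ = ν₂ (ℓ' - ℓ'')` puts two elements of `L` on a common valuation `M` and the third on
`M + a` with `a ≥ 1`. Every nonzero difference in `A` then has valuation `ρ - 1 - M` or
`ρ - 1 - M - a`, and the same principle gives `A` the same shape. Reading off odd parts yields
the divisibility conditions; conversely, in the normal form every difference of `A` is paired off
explicitly.
-/

local notation "ν" => padicValInt 2

lemma Finset.pairwise_ne_of_card_eq_four {α : Type*} [DecidableEq α] {a b c d : α}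
    (h : ({a, b, c, d} : Finset α).card = 4) :
    a ≠ b ∧ a ≠ c ∧ a ≠ d ∧ b ≠ c ∧ b ≠ d ∧ c ≠ d := by
  have h3 : ∀ {x y z : α}, ({x, y, z} : Finset α).card ≠ 4 := fun h' =>
    absurd (h' ▸ Finset.card_le_three) (by norm_num)
  refine ⟨?_, ?_, ?_, ?_, ?_, ?_⟩ <;> rintro rfl <;> simp [Finset.insert_comm] at h <;> exact h3 h

lemma Finset.exists_eq_insert_of_card_eq_four {α : Type*} [DecidableEq α] {s : Finset α} {a : α}
    (ha : a ∈ s) (hs : s.card = 4) : ∃ x y z, s = {a, x, y, z} := by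
  obtain ⟨x, y, z, -, -, -, he⟩ := Finset.card_eq_three.1 (by rw [Finset.card_erase_of_mem ha, hs])
  exact ⟨x, y, z, by rw [← Finset.insert_erase ha, he]⟩

lemma Int.ne_zero_of_odd {x : ℤ} (hx : Odd x) : x ≠ 0 := by
  rintro rfl
  simp at hx

lemma Odd.dvd_of_dvd_two_pow_mul {D x : ℤ} (hD : Odd D) {s : ℕ} (h : D ∣ 2 ^ s * x) : D ∣ x :=
  ((Int.isCoprime_two_left.2 hD).pow_left (m := s)).symm.dvd_of_dvd_mul_left h

lemma Int.dvd_mul_gcd_of_dvd_mul {d x m n : ℤ} (hm : d ∣ x * m) (hn : d ∣ x * n) :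
    d ∣ x * (Int.gcd m n : ℤ) := by
  rw [Int.gcd_eq_gcd_ab, mul_add, ← mul_assoc, ← mul_assoc]
  exact dvd_add (hm.mul_right _) (hn.mul_right _)

lemma padicValInt_neg (p : ℕ) (x : ℤ) : padicValInt p (-x) = padicValInt p x := by
  simp [padicValInt]

lemma padicValInt_sub_comm (p : ℕ) (x y : ℤ) : padicValInt p (x - y) = padicValInt p (y - x) := by
  rw [← neg_sub, padicValInt_neg]

lemma two_pow_dvd_iff_le_padicValInt {x : ℤ} (hx : x ≠ 0) (n : ℕ) :
    (2 : ℤ) ^ n ∣ x ↔ n ≤ ν x := by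
  simpa [hx] using padicValInt_dvd_iff (p := 2) n x

lemma two_pow_padicValInt_dvd (x : ℤ) : (2 : ℤ) ^ ν x ∣ x := by
  exact_mod_cast padicValInt_dvd (p := 2) x

lemma padicValInt_two_pow_mul (s : ℕ) {x : ℤ} (hx : Odd x) : ν (2 ^ s * x) = s := by
  have h0 : 2 ^ s * x ≠ 0 := mul_ne_zero (by positivity) (Int.ne_zero_of_odd hx)
  refine le_antisymm (Nat.le_of_lt_succ ?_)
    ((two_pow_dvd_iff_le_padicValInt h0 s).1 (dvd_mul_right _ _))
  by_contra! h
  obtain ⟨k, hk⟩ := (two_pow_dvd_iff_le_padicValInt h0 (s + 1)).2 h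
  refine Int.not_even_iff_odd.2 hx ⟨k, mul_left_cancel₀ (pow_ne_zero s two_ne_zero) ?_⟩
  rw [hk, pow_succ]
  ring

lemma exists_odd_eq_two_pow_mul {x : ℤ} {s : ℕ} (hx : x ≠ 0) (hs : ν x = s) :
    ∃ x', Odd x' ∧ x = 2 ^ s * x' := by
  subst hs
  obtain ⟨x', hx'⟩ := two_pow_padicValInt_dvd x
  refine ⟨x', Int.not_even_iff_odd.1 fun ⟨k, hk⟩ => ?_, hx'⟩
  have h2 : (2 : ℤ) ^ (ν x + 1) ∣ x := ⟨k, by rw [pow_succ, mul_assoc, two_mul, ← hk]; exact hx'⟩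
  have := (two_pow_dvd_iff_le_padicValInt hx _).1 h2
  omega

lemma padicValInt_sub_of_lt {x y : ℤ} (hx : x ≠ 0) (h : ν x < ν y) : ν (x - y) = ν x := by
  have hy : (2 : ℤ) ^ (ν x + 1) ∣ y := (padicValInt_dvd_iff (p := 2) _ y).2 (Or.inr h)
  have hxy : x - y ≠ 0 := by
    intro h0
    rw [sub_eq_zero.1 h0] at h
    exact h.false
  refine le_antisymm ?_ ((two_pow_dvd_iff_le_padicValInt hxy _).1
    (dvd_sub (two_pow_padicValInt_dvd x) ((pow_dvd_pow 2 h.le).trans (two_pow_padicValInt_dvd y))))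
  by_contra! hlt
  have := (two_pow_dvd_iff_le_padicValInt hx _).1
    (by simpa using dvd_add ((two_pow_dvd_iff_le_padicValInt hxy _).2 hlt) hy)
  omega

lemma lt_padicValInt_sub {x y : ℤ} (hxy : x ≠ y) (hx : x ≠ 0) (hy : y ≠ 0) (h : ν x = ν y) :
    ν x < ν (x - y) := by
  obtain ⟨x', hx', hxe⟩ := exists_odd_eq_two_pow_mul hx rfl
  obtain ⟨y', hy', hye⟩ := exists_odd_eq_two_pow_mul hy rfl
  obtain ⟨k, hk⟩ := hx'.sub_odd hy'
  have hsub : x - y = 2 ^ ν x * (x' - y') := by rw [mul_sub, ← hxe, h, ← hye]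
  exact (two_pow_dvd_iff_le_padicValInt (sub_ne_zero.2 hxy) _).1
    ⟨k, by rw [hsub, hk, pow_succ]; ring⟩

lemma padicValInt_cases_of_eq_padicValInt_sub {x y z : ℤ} (hy : y ≠ 0) (hz : z ≠ 0)
    (hyz : y ≠ z) (h : ν x = ν (y - z)) :
    (ν y = ν z ∧ ν z < ν x) ∨ (ν x = ν y ∧ ν y < ν z) ∨ (ν x = ν z ∧ ν z < ν y) := by
  rcases lt_trichotomy (ν y) (ν z) with hlt | heq | hgt
  · have := padicValInt_sub_of_lt hy hlt
    omega
  · have := lt_padicValInt_sub hyz hy hz heq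
    omega
  · have := padicValInt_sub_of_lt hz hgt
    rw [padicValInt_sub_comm] at h
    omega

lemma padicValInt_cases_of_two_levels {x y z : ℤ} {m n k : ℕ} (hmn : m < n)
    (hA : ({0, x, y, z} : Finset ℤ).card = 4)
    (h : ∀ b ∈ ({0, x, y, z} : Finset ℤ), ∀ b' ∈ ({0, x, y, z} : Finset ℤ), b ≠ b' →
      ν (b - b') + m = k ∨ ν (b - b') + n = k) :
    (ν x + m = k ∧ ν y + n = k ∧ ν z + n = k ∧ ν (y - z) + m = k) ∨
    (ν y + m = k ∧ ν x + n = k ∧ ν z + n = k ∧ ν (x - z) + m = k) ∨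
    (ν z + m = k ∧ ν x + n = k ∧ ν y + n = k ∧ ν (x - y) + m = k) := by
  obtain ⟨hx, hy, hz, hxy, hxz, hyz⟩ := Finset.pairwise_ne_of_card_eq_four hA
  -- two elements on a common level `j` have a difference of larger valuation, so `j` is the
  -- lower level `k - n` and the difference lies on the upper level `k - m`
  have same : ∀ s t : ℤ, s ≠ t → s ≠ 0 → t ≠ 0 → (ν (s - t) + m = k ∨ ν (s - t) + n = k) →
      ∀ j, j = m ∨ j = n → ν s + j = k → ν t + j = k → j = n ∧ ν (s - t) + m = k := by
    intro s t hst hs ht hlev j hj hsj htj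
    have := lt_padicValInt_sub hst hs ht (by omega)
    omega
  have sxy := same x y hxy hx.symm hy.symm (h x (by simp) y (by simp) hxy)
  have sxz := same x z hxz hx.symm hz.symm (h x (by simp) z (by simp) hxz)
  have syz := same y z hyz hy.symm hz.symm (h y (by simp) z (by simp) hyz)
  have sdiff := same (x - y) (x - z) (sub_right_injective.ne hyz) (sub_ne_zero.2 hxy)
    (sub_ne_zero.2 hxz) (by
      rw [sub_sub_sub_cancel_left, padicValInt_sub_comm 2 z y]
      exact h y (by simp) z (by simp) hyz)
  rw [sub_sub_sub_cancel_left, padicValInt_sub_comm 2 z y] at sdiff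
  have hx' := h x (by simp) 0 (by simp) hx.symm
  have hy' := h y (by simp) 0 (by simp) hy.symm
  have hz' := h z (by simp) 0 (by simp) hz.symm
  simp only [sub_zero] at hx' hy' hz'
  rcases hx' with hx' | hx' <;> rcases hy' with hy' | hy' <;> rcases hz' with hz' | hz'
  · exact absurd (sxy m (Or.inl rfl) hx' hy').1 hmn.ne
  · exact absurd (sxy m (Or.inl rfl) hx' hy').1 hmn.ne
  · exact absurd (sxz m (Or.inl rfl) hx' hz').1 hmn.ne
  · exact Or.inl ⟨hx', hy', hz', (syz n (Or.inr rfl) hy' hz').2⟩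
  · exact absurd (syz m (Or.inl rfl) hy' hz').1 hmn.ne
  · exact Or.inr (Or.inl ⟨hy', hx', hz', (sxz n (Or.inr rfl) hx' hz').2⟩)
  · exact Or.inr (Or.inr ⟨hz', hx', hy', (sxy n (Or.inr rfl) hx' hy').2⟩)
  · exact absurd (sdiff m (Or.inl rfl) (sxy n (Or.inr rfl) hx' hy').2
      (sxz n (Or.inr rfl) hx' hz').2).1 hmn.ne

def IsOddMultipleOfHalf (R t : ℤ) : Prop := ∃ k, Odd k ∧ 2 * t = k * R

lemma IsOddMultipleOfHalf.neg {R t : ℤ} (h : IsOddMultipleOfHalf R t) :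
    IsOddMultipleOfHalf R (-t) := by
  obtain ⟨k, hk, h⟩ := h
  exact ⟨-k, hk.neg, by linear_combination -h⟩

lemma isOddMultipleOfHalf_two_pow_mul {d m : ℤ} (s : ℕ) (hm : Odd m) (hd : d ∣ m) :
    IsOddMultipleOfHalf (2 ^ (s + 1) * d) (2 ^ s * m) := by
  obtain ⟨k, rfl⟩ := hd
  exact ⟨k, (Int.odd_mul.1 hm).2, by ring⟩

lemma isOddMultipleOfHalf_iff {ρ : ℕ} {D t : ℤ} (hD : Odd D) (ht : t ≠ 0) :
    IsOddMultipleOfHalf (2 ^ ρ * D) t ↔ ν t + 1 = ρ ∧ D ∣ t := by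
  constructor
  · rintro ⟨k, hk, h⟩
    have h2 : t * 2 = 2 ^ ρ * (k * D) := by linear_combination h
    refine ⟨?_, (Int.isCoprime_two_right.2 hD).dvd_of_dvd_mul_right ⟨2 ^ ρ * k, ?_⟩⟩
    · rw [← padicValInt_mul_eq_succ t ht, Nat.cast_ofNat, h2,
        padicValInt_two_pow_mul ρ (Int.odd_mul.2 ⟨hk, hD⟩)]
    · linear_combination h
  · rintro ⟨hρ, hDt⟩
    obtain ⟨t', ht', hte⟩ := exists_odd_eq_two_pow_mul ht rfl
    obtain ⟨m, rfl⟩ := hD.dvd_of_dvd_two_pow_mul (hte ▸ hDt)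
    rw [hte, ← hρ]
    exact isOddMultipleOfHalf_two_pow_mul _ ht' (dvd_mul_right D m)

lemma isOddMultipleOfHalf_mul_iff {ρ : ℕ} {D δ ℓ : ℤ} (hD : Odd D) (hδ : δ ≠ 0) (hℓ : ℓ ≠ 0) :
    IsOddMultipleOfHalf (2 ^ ρ * D) (δ * ℓ) ↔ ν δ + ν ℓ + 1 = ρ ∧ D ∣ δ * ℓ := by
  rw [isOddMultipleOfHalf_iff hD (mul_ne_zero hδ hℓ), padicValInt.mul hδ hℓ]

def expFrac (R t : ℤ) : ℂ := cexp (2 * π * I * t / R)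

lemma expFrac_zero (R : ℤ) : expFrac R 0 = 1 := by simp [expFrac]

lemma expFrac_add (R s t : ℤ) : expFrac R (s + t) = expFrac R s * expFrac R t := by
  rw [expFrac, expFrac, expFrac, ← Complex.exp_add]
  push_cast
  ring_nf

lemma norm_expFrac (R t : ℤ) : ‖expFrac R t‖ = 1 := by
  rw [expFrac, show 2 * π * I * t / R = ((2 * π * t / R : ℝ) : ℂ) * I by push_cast; ring]
  exact Complex.norm_exp_ofReal_mul_I _

lemma expFrac_eq_neg_one_iff {R : ℤ} (hR : R ≠ 0) (t : ℤ) :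
    expFrac R t = -1 ↔ IsOddMultipleOfHalf R t := by
  have hR' : (R : ℂ) ≠ 0 := by exact_mod_cast hR
  rw [expFrac, show 2 * π * I * t / R = (2 * π * I * t / R - π * I) + π * I by ring,
    Complex.exp_add, Complex.exp_pi_mul_I, mul_neg_one, neg_inj, Complex.exp_eq_one_iff]
  constructor
  · rintro ⟨n, hn⟩
    refine ⟨2 * n + 1, odd_two_mul_add_one n, ?_⟩
    field_simp at hn
    have h : ((2 * t : ℤ) : ℂ) = ((2 * n + 1) * R : ℤ) := by push_cast; linear_combination hn
    exact_mod_cast h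
  · rintro ⟨k, ⟨n, rfl⟩, h⟩
    refine ⟨n, ?_⟩
    have h' : (2 * t : ℂ) = (2 * n + 1) * R := by exact_mod_cast h
    field_simp
    linear_combination h'

lemma expFrac_eq_neg_iff (R s t : ℤ) :
    expFrac R s = -expFrac R t ↔ expFrac R (s - t) = -1 := by
  rw [← sub_add_cancel s t, expFrac_add, add_sub_cancel_right, neg_eq_neg_one_mul,
    mul_left_inj' (norm_pos_iff.1 (by rw [norm_expFrac]; exact one_pos))]

lemma Complex.one_add_add_add_eq_zero_iff {z₁ z₂ z₃ : ℂ} (h₁ : ‖z₁‖ = 1) (h₂ : ‖z₂‖ = 1)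
    (h₃ : ‖z₃‖ = 1) :
    1 + z₁ + z₂ + z₃ = 0 ↔
      (z₁ = -1 ∧ z₂ = -z₃) ∨ (z₂ = -1 ∧ z₁ = -z₃) ∨ (z₃ = -1 ∧ z₁ = -z₂) := by
  constructor
  · intro h
    have hz : ∀ {z : ℂ}, ‖z‖ = 1 → z ≠ 0 := fun hz =>
      norm_ne_zero_iff.1 (by rw [hz]; exact one_ne_zero)
    have hinv : 1 + z₁⁻¹ + z₂⁻¹ + z₃⁻¹ = 0 := by
      rw [inv_eq_conj h₁, inv_eq_conj h₂, inv_eq_conj h₃]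
      simpa using congrArg (starRingEnd ℂ) h
    field_simp [hz h₁, hz h₂, hz h₃] at hinv
    have hprod : (1 + z₁) * (1 + z₂) * (1 + z₃) = 0 := by linear_combination h + hinv
    rcases mul_eq_zero.1 hprod with h12 | h3
    · rcases mul_eq_zero.1 h12 with h1 | h2
      · exact Or.inl ⟨by linear_combination h1, by linear_combination h - h1⟩
      · exact Or.inr (Or.inl ⟨by linear_combination h2, by linear_combination h - h2⟩)
    · exact Or.inr (Or.inr ⟨by linear_combination h3, by linear_combination h - h3⟩)
  · rintro (⟨h, h'⟩ | ⟨h, h'⟩ | ⟨h, h'⟩) <;> linear_combination h + h'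

def VanishesInPairs (R δ u v w : ℤ) : Prop :=
  (IsOddMultipleOfHalf R (δ * u) ∧ IsOddMultipleOfHalf R (δ * (v - w))) ∨
  (IsOddMultipleOfHalf R (δ * v) ∧ IsOddMultipleOfHalf R (δ * (u - w))) ∨
  (IsOddMultipleOfHalf R (δ * w) ∧ IsOddMultipleOfHalf R (δ * (u - v)))

lemma sum_expFrac_eq_zero_iff {R u v w : ℤ} (hR : R ≠ 0)
    (hL : ({0, u, v, w} : Finset ℤ).card = 4) (δ : ℤ) :
    ∑ ℓ ∈ ({0, u, v, w} : Finset ℤ), expFrac R (δ * ℓ) = 0 ↔ VanishesInPairs R δ u v w := by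
  obtain ⟨hu, hv, hw, huv, huw, hvw⟩ := Finset.pairwise_ne_of_card_eq_four hL
  rw [Finset.sum_insert (by simp [hu, hv, hw]), Finset.sum_insert (by simp [huv, huw]),
    Finset.sum_pair hvw, mul_zero, expFrac_zero, ← add_assoc, ← add_assoc,
    Complex.one_add_add_add_eq_zero_iff (norm_expFrac _ _) (norm_expFrac _ _) (norm_expFrac _ _)]
  simp only [VanishesInPairs, expFrac_eq_neg_iff, ← mul_sub, expFrac_eq_neg_one_iff hR]

lemma isSpectrumFor_image_div_iff {A L : Finset ℤ} {R : ℤ} (hR : R ≠ 0)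
    (hcard : L.card = A.card) :
    IsSpectrumFor A (L.image fun x : ℤ => (x : ℝ) / R) ↔
      ∀ b ∈ A, ∀ b' ∈ A, b ≠ b' → ∑ ℓ ∈ L, expFrac R ((b - b') * ℓ) = 0 := by
  have hinj : Function.Injective fun x : ℤ => (x : ℝ) / R :=
    fun x y h => Int.cast_injective ((div_left_inj' (Int.cast_ne_zero.2 hR)).1 h)
  have hterm : ∀ b b' ℓ : ℤ, cexp (2 * π * I * ((b : ℂ) - b') * (((ℓ : ℝ) / R : ℝ) : ℂ)) =
      expFrac R ((b - b') * ℓ) := fun b b' ℓ => by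
    rw [expFrac]
    push_cast
    ring_nf
  simp only [IsSpectrumFor, Finset.card_image_of_injective _ hinj, hcard, true_and,
    Finset.sum_image fun x _ y _ h => hinj h, hterm]
  refine forall₄_congr fun b _ b' _ => ?_
  by_cases hbb : b = b'
  · simp [hbb, expFrac_zero, hcard]
  · simp [hbb]

lemma vanishesInPairs_two_pow_mul_iff {ρ : ℕ} {D δ u v w : ℤ} (hD : Odd D) (hδ : δ ≠ 0)
    (hL : ({0, u, v, w} : Finset ℤ).card = 4) :
    VanishesInPairs (2 ^ ρ * D) δ u v w ↔
      ((ν δ + ν u + 1 = ρ ∧ D ∣ δ * u) ∧ ν δ + ν (v - w) + 1 = ρ ∧ D ∣ δ * (v - w)) ∨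
      ((ν δ + ν v + 1 = ρ ∧ D ∣ δ * v) ∧ ν δ + ν (u - w) + 1 = ρ ∧ D ∣ δ * (u - w)) ∨
      ((ν δ + ν w + 1 = ρ ∧ D ∣ δ * w) ∧ ν δ + ν (u - v) + 1 = ρ ∧ D ∣ δ * (u - v)) := by
  obtain ⟨hu, hv, hw, huv, huw, hvw⟩ := Finset.pairwise_ne_of_card_eq_four hL
  simp only [VanishesInPairs, isOddMultipleOfHalf_mul_iff hD hδ hu.symm,
    isOddMultipleOfHalf_mul_iff hD hδ hv.symm, isOddMultipleOfHalf_mul_iff hD hδ hw.symm,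
    isOddMultipleOfHalf_mul_iff hD hδ (sub_ne_zero.2 huv),
    isOddMultipleOfHalf_mul_iff hD hδ (sub_ne_zero.2 huw),
    isOddMultipleOfHalf_mul_iff hD hδ (sub_ne_zero.2 hvw)]

namespace VanishesInPairs

variable {ρ : ℕ} {R D δ u v w : ℤ}

lemma swap₁₂ (h : VanishesInPairs R δ u v w) : VanishesInPairs R δ v u w := by
  have hneg : δ * (v - u) = -(δ * (u - v)) := by ring
  rcases h with h | h | ⟨h₁, h₂⟩
  exacts [Or.inr (Or.inl h), Or.inl h, Or.inr (Or.inr ⟨h₁, hneg ▸ h₂.neg⟩)]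

lemma swap₂₃ (h : VanishesInPairs R δ u v w) : VanishesInPairs R δ u w v := by
  have hneg : δ * (w - v) = -(δ * (v - w)) := by ring
  rcases h with ⟨h₁, h₂⟩ | h | h
  exacts [Or.inl ⟨h₁, hneg ▸ h₂.neg⟩, Or.inr (Or.inr h), Or.inr (Or.inl h)]

lemma neg (h : VanishesInPairs R δ u v w) : VanishesInPairs R (-δ) u v w := by
  simp only [VanishesInPairs, neg_mul] at h ⊢
  rcases h with ⟨h₁, h₂⟩ | ⟨h₁, h₂⟩ | ⟨h₁, h₂⟩
  exacts [Or.inl ⟨h₁.neg, h₂.neg⟩, Or.inr (Or.inl ⟨h₁.neg, h₂.neg⟩),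
    Or.inr (Or.inr ⟨h₁.neg, h₂.neg⟩)]

lemma padicValInt_shape (hD : Odd D) (hδ : δ ≠ 0) (hL : ({0, u, v, w} : Finset ℤ).card = 4)
    (h : VanishesInPairs (2 ^ ρ * D) δ u v w) :
    (ν u = ν v ∧ ν v < ν w) ∨ (ν u = ν w ∧ ν w < ν v) ∨ (ν v = ν w ∧ ν w < ν u) := by
  obtain ⟨hu, hv, hw, huv, huw, hvw⟩ := Finset.pairwise_ne_of_card_eq_four hL
  rcases (vanishesInPairs_two_pow_mul_iff hD hδ hL).1 h with
    ⟨⟨h₁, -⟩, h₂, -⟩ | ⟨⟨h₁, -⟩, h₂, -⟩ | ⟨⟨h₁, -⟩, h₂, -⟩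
  · have := padicValInt_cases_of_eq_padicValInt_sub (x := u) hv.symm hw.symm hvw (by omega)
    omega
  · have := padicValInt_cases_of_eq_padicValInt_sub (x := v) hu.symm hw.symm huw (by omega)
    omega
  · have := padicValInt_cases_of_eq_padicValInt_sub (x := w) hu.symm hv.symm huv (by omega)
    omega

lemma padicValInt_cases (hD : Odd D) (hδ : δ ≠ 0) (hL : ({0, u, v, w} : Finset ℤ).card = 4)
    (huv : ν u = ν v) (h : VanishesInPairs (2 ^ ρ * D) δ u v w) :
    (ν δ + ν u + 1 = ρ ∧ (D ∣ δ * u ∨ D ∣ δ * v)) ∨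
      (ν δ + ν w + 1 = ρ ∧ ν (u - v) = ν w ∧ D ∣ δ * w ∧ D ∣ δ * (u - v)) := by
  rcases (vanishesInPairs_two_pow_mul_iff hD hδ hL).1 h with
    ⟨⟨h₁, hd⟩, -⟩ | ⟨⟨h₁, hd⟩, -⟩ | ⟨⟨h₁, hd⟩, h₂, hd'⟩
  · exact Or.inl ⟨h₁, Or.inl hd⟩
  · exact Or.inl ⟨by omega, Or.inr hd⟩
  · exact Or.inr ⟨h₁, by omega, hd, hd'⟩

end VanishesInPairs

def HadamardNormalForm (A L : Finset ℤ) (R : ℤ) : Prop :=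
  ∃ (C M : ℕ) (a : ℕ) (c₁ c₂ c₃ n₁ n₂ n₃ d : ℤ),
    1 ≤ a ∧
    Odd c₁ ∧ Odd c₂ ∧ Odd c₃ ∧ Odd n₁ ∧ Odd n₂ ∧ Odd n₃ ∧
    R = 2 ^ (C + M + a + 1) * d ∧
    A = ({0, 2 ^ a * c₁, c₂, c₂ + 2 ^ a * c₃} : Finset ℤ).image (fun x => 2 ^ C * x) ∧
    L = ({0, n₁, n₁ + 2 ^ a * n₂, 2 ^ a * n₃} : Finset ℤ).image (fun x => 2 ^ M * x) ∧
    d ∣ c₁ * (Int.gcd n₁ (Int.gcd n₂ n₃) : ℤ) ∧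
    d ∣ c₃ * (Int.gcd n₁ (Int.gcd n₂ n₃) : ℤ) ∧
    d ∣ n₂ * (Int.gcd c₁ (Int.gcd c₂ c₃) : ℤ) ∧
    d ∣ n₃ * (Int.gcd c₁ (Int.gcd c₂ c₃) : ℤ)

lemma hadamardNormalForm_of_padicValInt {C M a : ℕ} {D α β γ u v w : ℤ} (hD : Odd D)
    (ha : 1 ≤ a) (hβ0 : β ≠ 0) (hu0 : u ≠ 0) (hα : ν α = C + a) (hβ : ν β = C)
    (hγ : ν (γ - β) = C + a) (hu : ν u = M) (hv : ν (v - u) = M + a) (hw : ν w = M + a)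
    (hαL : D ∣ α * u ∧ D ∣ α * (v - u) ∧ D ∣ α * w)
    (hγL : D ∣ (γ - β) * u ∧ D ∣ (γ - β) * (v - u) ∧ D ∣ (γ - β) * w)
    (hβL : D ∣ β * (v - u) ∧ D ∣ β * w) :
    HadamardNormalForm {0, α, β, γ} {0, u, v, w} (2 ^ (C + M + a + 1) * D) := by
  have ne_zero : ∀ {x : ℤ} {s : ℕ}, ν x = s + a → x ≠ 0 := fun hx h0 => by
    rw [h0, padicValInt.zero] at hx
    omega
  obtain ⟨c₁, hc₁, rfl⟩ := exists_odd_eq_two_pow_mul (ne_zero hα) hα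
  obtain ⟨c₂, hc₂, rfl⟩ := exists_odd_eq_two_pow_mul hβ0 hβ
  obtain ⟨c₃, hc₃, hγe⟩ := exists_odd_eq_two_pow_mul (ne_zero hγ) hγ
  obtain rfl : γ = 2 ^ C * c₂ + 2 ^ (C + a) * c₃ := by linear_combination hγe
  obtain ⟨n₁, hn₁, rfl⟩ := exists_odd_eq_two_pow_mul hu0 hu
  obtain ⟨n₂, hn₂, hve⟩ := exists_odd_eq_two_pow_mul (ne_zero hv) hv
  obtain rfl : v = 2 ^ M * n₁ + 2 ^ (M + a) * n₂ := by linear_combination hve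
  obtain ⟨n₃, hn₃, rfl⟩ := exists_odd_eq_two_pow_mul (ne_zero hw) hw
  simp only [add_sub_cancel_left] at hαL hβL hγL
  have odd_parts : ∀ {s t : ℕ} {x y : ℤ}, D ∣ 2 ^ s * x * (2 ^ t * y) → D ∣ x * y := fun h =>
    hD.dvd_of_dvd_two_pow_mul (by rwa [mul_mul_mul_comm, ← pow_add] at h)
  obtain ⟨h₁₁, h₁₂, h₁₃⟩ := hαL
  obtain ⟨h₃₁, h₃₂, h₃₃⟩ := hγL
  obtain ⟨h₂₂, h₂₃⟩ := hβL
  refine ⟨C, M, a, c₁, c₂, c₃, n₁, n₂, n₃, D, ha, hc₁, hc₂, hc₃, hn₁, hn₂, hn₃, rfl, ?_, ?_,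
    Int.dvd_mul_gcd_of_dvd_mul (odd_parts h₁₁)
      (Int.dvd_mul_gcd_of_dvd_mul (odd_parts h₁₂) (odd_parts h₁₃)),
    Int.dvd_mul_gcd_of_dvd_mul (odd_parts h₃₁)
      (Int.dvd_mul_gcd_of_dvd_mul (odd_parts h₃₂) (odd_parts h₃₃)), ?_, ?_⟩
  · simp only [Finset.image_insert, Finset.image_singleton, mul_zero]
    ring_nf
  · simp only [Finset.image_insert, Finset.image_singleton, mul_zero]
    ring_nf
  · refine Int.dvd_mul_gcd_of_dvd_mul ?_ (Int.dvd_mul_gcd_of_dvd_mul ?_ ?_) <;> rw [mul_comm]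
    exacts [odd_parts h₁₂, odd_parts h₂₂, odd_parts h₃₂]
  · refine Int.dvd_mul_gcd_of_dvd_mul ?_ (Int.dvd_mul_gcd_of_dvd_mul ?_ ?_) <;> rw [mul_comm]
    exacts [odd_parts h₁₃, odd_parts h₂₃, odd_parts h₃₃]

lemma dvd_mul_of_dvd_rows {D α β γ u v w : ℤ} (hβw : D ∣ β * w) (hβuv : D ∣ β * (u - v))
    (hγw : D ∣ γ * w) (hγuv : D ∣ γ * (u - v)) (hαβw : D ∣ (α - β) * w)
    (hαβuv : D ∣ (α - β) * (u - v)) (hα : D ∣ α * u ∨ D ∣ α * v)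
    (hβγ : D ∣ (β - γ) * u ∨ D ∣ (β - γ) * v) :
    (D ∣ α * u ∧ D ∣ α * (v - u) ∧ D ∣ α * w) ∧
    (D ∣ (γ - β) * u ∧ D ∣ (γ - β) * (v - u) ∧ D ∣ (γ - β) * w) ∧
    (D ∣ β * (v - u) ∧ D ∣ β * w) := by
  have hαuv : D ∣ α * (u - v) := by simpa [sub_mul] using dvd_add hαβuv hβuv
  have hβγuv : D ∣ (β - γ) * (u - v) := by simpa [sub_mul] using dvd_sub hβuv hγuv
  have flip : ∀ {x : ℤ}, D ∣ x * (u - v) → D ∣ x * (v - u) := fun h => by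
    rwa [← neg_sub u v, mul_neg, dvd_neg]
  refine ⟨⟨hα.elim id fun h => by simpa [mul_sub] using dvd_add h hαuv, flip hαuv,
    by simpa [sub_mul] using dvd_add hαβw hβw⟩, ?_, flip hβuv, hβw⟩
  rw [← neg_sub β γ]
  simp only [neg_mul, dvd_neg]
  exact ⟨hβγ.elim id fun h => by simpa [mul_sub] using dvd_add h hβγuv, flip hβγuv,
    by simpa [sub_mul] using dvd_sub hβw hγw⟩

lemma hadamardNormalForm_of_forall_vanishesInPairs_of_levels {ρ : ℕ} {D α β γ u v w : ℤ}
    {A : Finset ℤ} (hD : Odd D) (hA : A = {0, α, β, γ}) (hA4 : A.card = 4)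
    (hL : ({0, u, v, w} : Finset ℤ).card = 4) (huv : ν u = ν v) (hvw : ν v < ν w)
    (hα : ν α + ν u + 1 = ρ) (hβ : ν β + ν w + 1 = ρ) (hγ : ν γ + ν w + 1 = ρ)
    (hβγ : ν (β - γ) + ν u + 1 = ρ)
    (hP : ∀ b ∈ A, ∀ b' ∈ A, b ≠ b' → VanishesInPairs (2 ^ ρ * D) (b - b') u v w) :
    HadamardNormalForm A {0, u, v, w} (2 ^ ρ * D) := by
  obtain ⟨hα0, hβ0, hγ0, hαβ, -, hβγ0⟩ := Finset.pairwise_ne_of_card_eq_four (hA ▸ hA4)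
  obtain ⟨hu0, -, -, -, -, -⟩ := Finset.pairwise_ne_of_card_eq_four hL
  have h0A : (0 : ℤ) ∈ A := by simp [hA]
  have hαA : α ∈ A := by simp [hA]
  have hβA : β ∈ A := by simp [hA]
  have hγA : γ ∈ A := by simp [hA]
  have low : ∀ b ∈ A, ∀ b' ∈ A, b ≠ b' → ν (b - b') + ν w + 1 = ρ →
      ν (u - v) = ν w ∧ D ∣ (b - b') * w ∧ D ∣ (b - b') * (u - v) := fun b hb b' hb' hbb hlev => by
    rcases (hP b hb b' hb' hbb).padicValInt_cases hD (sub_ne_zero.2 hbb) hL huv with h | h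
    · omega
    · exact h.2
  have high : ∀ b ∈ A, ∀ b' ∈ A, b ≠ b' → ν (b - b') + ν u + 1 = ρ →
      D ∣ (b - b') * u ∨ D ∣ (b - b') * v := fun b hb b' hb' hbb hlev => by
    rcases (hP b hb b' hb' hbb).padicValInt_cases hD (sub_ne_zero.2 hbb) hL huv with h | h
    · exact h.2
    · omega
  have hαβ' : ν (α - β) = ν β := by
    rw [padicValInt_sub_comm, padicValInt_sub_of_lt hβ0.symm (by omega)]
  obtain ⟨hr, hβw, hβuv⟩ := low β hβA 0 h0A hβ0.symm (by simpa using hβ)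
  obtain ⟨-, hγw, hγuv⟩ := low γ hγA 0 h0A hγ0.symm (by simpa using hγ)
  obtain ⟨-, hαβw, hαβuv⟩ := low α hαA β hβA hαβ (by omega)
  have hαuv := high α hαA 0 h0A hα0.symm (by simpa using hα)
  simp only [sub_zero] at hβw hβuv hγw hγuv hαuv
  obtain ⟨hαL, hγL, hβL⟩ := dvd_mul_of_dvd_rows hβw hβuv hγw hγuv hαβw hαβuv hαuv
    (high β hβA γ hγA hβγ0 hβγ)
  obtain rfl : ρ = ν β + ν u + (ν w - ν u) + 1 := by omega
  rw [hA]
  exact hadamardNormalForm_of_padicValInt hD (by omega) hβ0.symm hu0.symm (by omega) rfl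
    (by rw [padicValInt_sub_comm]; omega) rfl (by rw [padicValInt_sub_comm]; omega) (by omega)
    hαL hγL hβL

lemma hadamardNormalForm_of_forall_vanishesInPairs_of_lt {ρ : ℕ} {D u v w : ℤ}
    {A : Finset ℤ} (hD : Odd D) (h0A : 0 ∈ A) (hA4 : A.card = 4)
    (hL : ({0, u, v, w} : Finset ℤ).card = 4) (huv : ν u = ν v) (hvw : ν v < ν w)
    (hP : ∀ b ∈ A, ∀ b' ∈ A, b ≠ b' → VanishesInPairs (2 ^ ρ * D) (b - b') u v w) :
    HadamardNormalForm A {0, u, v, w} (2 ^ ρ * D) := by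
  obtain ⟨x, y, z, hA⟩ := Finset.exists_eq_insert_of_card_eq_four h0A hA4
  have hlevel : ∀ b ∈ A, ∀ b' ∈ A, b ≠ b' →
      ν (b - b') + (ν u + 1) = ρ ∨ ν (b - b') + (ν w + 1) = ρ := fun b hb b' hb' hbb => by
    rcases (hP b hb b' hb' hbb).padicValInt_cases hD (sub_ne_zero.2 hbb) hL huv with h | h
    · exact Or.inl (by omega)
    · exact Or.inr (by omega)
  rw [hA] at hA4 hlevel
  rcases padicValInt_cases_of_two_levels (by omega) hA4 hlevel with
    ⟨h₁, h₂, h₃, h₄⟩ | ⟨h₁, h₂, h₃, h₄⟩ | ⟨h₁, h₂, h₃, h₄⟩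
  · exact hadamardNormalForm_of_forall_vanishesInPairs_of_levels hD hA (hA ▸ hA4) hL huv hvw
      (by omega) (by omega) (by omega) (by omega) hP
  · have hA' : A = {0, y, x, z} := by rw [hA, Finset.insert_comm x y]
    exact hadamardNormalForm_of_forall_vanishesInPairs_of_levels hD hA' (hA ▸ hA4) hL huv hvw
      (by omega) (by omega) (by omega) (by omega) hP
  · have hA' : A = {0, z, x, y} := by rw [hA, Finset.pair_comm y z, Finset.insert_comm x z]
    exact hadamardNormalForm_of_forall_vanishesInPairs_of_levels hD hA' (hA ▸ hA4) hL huv hvw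
      (by omega) (by omega) (by omega) (by omega) hP

lemma hadamardNormalForm_of_forall_vanishesInPairs {ρ : ℕ} {D u v w : ℤ}
    {A : Finset ℤ} (hD : Odd D) (h0A : 0 ∈ A) (hA4 : A.card = 4)
    (hL : ({0, u, v, w} : Finset ℤ).card = 4)
    (hP : ∀ b ∈ A, ∀ b' ∈ A, b ≠ b' → VanishesInPairs (2 ^ ρ * D) (b - b') u v w) :
    HadamardNormalForm A {0, u, v, w} (2 ^ ρ * D) := by
  obtain ⟨x, hx, hx0⟩ := Finset.exists_mem_ne (by omega : 1 < A.card) 0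
  rcases (hP x hx 0 h0A hx0).padicValInt_shape hD (by simpa using hx0) hL with
    ⟨h₁, h₂⟩ | ⟨h₁, h₂⟩ | ⟨h₁, h₂⟩
  · exact hadamardNormalForm_of_forall_vanishesInPairs_of_lt hD h0A hA4 hL h₁ h₂ hP
  · rw [Finset.pair_comm v w] at hL ⊢
    exact hadamardNormalForm_of_forall_vanishesInPairs_of_lt hD h0A hA4 hL h₁ h₂
      fun b hb b' hb' hbb => (hP b hb b' hb' hbb).swap₂₃
  · rw [Finset.insert_comm u v, Finset.pair_comm u w] at hL ⊢
    exact hadamardNormalForm_of_forall_vanishesInPairs_of_lt hD h0A hA4 hL h₁ h₂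
      fun b hb b' hb' hbb => (hP b hb b' hb' hbb).swap₁₂.swap₂₃

lemma forall_sub_mem_insert_zero {P : ℤ → Prop} (hneg : ∀ t, P t → P (-t)) {x y z : ℤ}
    (hx : P x) (hy : P y) (hz : P z) (hxy : P (x - y)) (hxz : P (x - z)) (hyz : P (y - z)) :
    ∀ b ∈ ({0, x, y, z} : Finset ℤ), ∀ b' ∈ ({0, x, y, z} : Finset ℤ), b ≠ b' → P (b - b') := by
  simp only [Finset.mem_insert, Finset.mem_singleton]
  rintro b (rfl | rfl | rfl | rfl) b' (rfl | rfl | rfl | rfl) hbb <;>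
    first
    | exact absurd rfl hbb
    | simpa using hx | simpa using hy | simpa using hz
    | simpa using hneg _ hx | simpa using hneg _ hy | simpa using hneg _ hz
    | exact hxy | exact hxz | exact hyz
    | simpa using hneg _ hxy | simpa using hneg _ hxz | simpa using hneg _ hyz

section NormalForm

variable {C M a : ℕ} {d m n₁ n₂ n₃ : ℤ}

lemma vanishesInPairs_two_pow_mul_of_dvd_low (hm : Odd m) (hn₂ : Odd n₂) (hn₃ : Odd n₃)
    (h₂ : d ∣ m * n₂) (h₃ : d ∣ m * n₃) :
    VanishesInPairs (2 ^ (C + M + a + 1) * d) (2 ^ C * m)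
      (2 ^ M * n₁) (2 ^ M * (n₁ + 2 ^ a * n₂)) (2 ^ M * (2 ^ a * n₃)) := by
  refine Or.inr (Or.inr ⟨?_, ?_⟩)
  · rw [show 2 ^ C * m * (2 ^ M * (2 ^ a * n₃)) = 2 ^ (C + M + a) * (m * n₃) by ring]
    exact isOddMultipleOfHalf_two_pow_mul _ (hm.mul hn₃) h₃
  · rw [show 2 ^ C * m * (2 ^ M * n₁ - 2 ^ M * (n₁ + 2 ^ a * n₂)) =
      -(2 ^ (C + M + a) * (m * n₂)) by ring]
    exact (isOddMultipleOfHalf_two_pow_mul _ (hm.mul hn₂) h₂).neg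

lemma vanishesInPairs_two_pow_mul_of_dvd_high (ha : 1 ≤ a) (hm : Odd m) (hn₁ : Odd n₁)
    (h₁ : d ∣ m * n₁) (h₂ : d ∣ m * n₂) (h₃ : d ∣ m * n₃) :
    VanishesInPairs (2 ^ (C + M + a + 1) * d) (2 ^ (C + a) * m)
      (2 ^ M * n₁) (2 ^ M * (n₁ + 2 ^ a * n₂)) (2 ^ M * (2 ^ a * n₃)) := by
  refine Or.inl ⟨?_, ?_⟩
  · rw [show 2 ^ (C + a) * m * (2 ^ M * n₁) = 2 ^ (C + M + a) * (m * n₁) by ring]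
    exact isOddMultipleOfHalf_two_pow_mul _ (hm.mul hn₁) h₁
  · rw [show 2 ^ (C + a) * m * (2 ^ M * (n₁ + 2 ^ a * n₂) - 2 ^ M * (2 ^ a * n₃)) =
      2 ^ (C + M + a) * (m * (n₁ + 2 ^ a * (n₂ - n₃))) by ring]
    refine isOddMultipleOfHalf_two_pow_mul _
      (hm.mul (hn₁.add_even ((Int.even_pow.2 ⟨even_two, by omega⟩).mul_right _))) ?_
    rw [mul_add, mul_left_comm, mul_sub]
    exact dvd_add h₁ ((dvd_sub h₂ h₃).mul_left _)

lemma forall_vanishesInPairs_of_dvd {c₁ c₂ c₃ : ℤ} (ha : 1 ≤ a) (hc₁ : Odd c₁) (hc₂ : Odd c₂)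
    (hc₃ : Odd c₃) (hn₁ : Odd n₁) (hn₂ : Odd n₂) (hn₃ : Odd n₃)
    (hd₁ : d ∣ c₁ * (Int.gcd n₁ (Int.gcd n₂ n₃) : ℤ))
    (hd₂ : d ∣ c₃ * (Int.gcd n₁ (Int.gcd n₂ n₃) : ℤ))
    (hd₃ : d ∣ n₂ * (Int.gcd c₁ (Int.gcd c₂ c₃) : ℤ))
    (hd₄ : d ∣ n₃ * (Int.gcd c₁ (Int.gcd c₂ c₃) : ℤ)) :
    ∀ b ∈ ({0, 2 ^ C * (2 ^ a * c₁), 2 ^ C * c₂, 2 ^ C * (c₂ + 2 ^ a * c₃)} : Finset ℤ),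
    ∀ b' ∈ ({0, 2 ^ C * (2 ^ a * c₁), 2 ^ C * c₂, 2 ^ C * (c₂ + 2 ^ a * c₃)} : Finset ℤ),
    b ≠ b' → VanishesInPairs (2 ^ (C + M + a + 1) * d) (b - b')
      (2 ^ M * n₁) (2 ^ M * (n₁ + 2 ^ a * n₂)) (2 ^ M * (2 ^ a * n₃)) := by
  set c := (Int.gcd c₁ (Int.gcd c₂ c₃) : ℤ)
  set n := (Int.gcd n₁ (Int.gcd n₂ n₃) : ℤ)
  have hc : c ∣ c₁ ∧ c ∣ c₂ ∧ c ∣ c₃ := ⟨Int.gcd_dvd_left _ _,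
    (Int.gcd_dvd_right _ _).trans (Int.gcd_dvd_left _ _),
    (Int.gcd_dvd_right _ _).trans (Int.gcd_dvd_right _ _)⟩
  have hn : n ∣ n₁ ∧ n ∣ n₂ ∧ n ∣ n₃ := ⟨Int.gcd_dvd_left _ _,
    (Int.gcd_dvd_right _ _).trans (Int.gcd_dvd_left _ _),
    (Int.gcd_dvd_right _ _).trans (Int.gcd_dvd_right _ _)⟩
  have h2a : Even ((2 : ℤ) ^ a) := Int.even_pow.2 ⟨even_two, by omega⟩
  have low : ∀ m, Odd m → c ∣ m → VanishesInPairs (2 ^ (C + M + a + 1) * d) (2 ^ C * m)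
      (2 ^ M * n₁) (2 ^ M * (n₁ + 2 ^ a * n₂)) (2 ^ M * (2 ^ a * n₃)) := fun m hm hcm =>
    vanishesInPairs_two_pow_mul_of_dvd_low hm hn₂ hn₃
      (by rw [mul_comm]; exact hd₃.trans (mul_dvd_mul_left _ hcm))
      (by rw [mul_comm]; exact hd₄.trans (mul_dvd_mul_left _ hcm))
  have high : ∀ m, Odd m → d ∣ m * n → VanishesInPairs (2 ^ (C + M + a + 1) * d)
      (2 ^ (C + a) * m) (2 ^ M * n₁) (2 ^ M * (n₁ + 2 ^ a * n₂)) (2 ^ M * (2 ^ a * n₃)) :=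
    fun m hm hdm => vanishesInPairs_two_pow_mul_of_dvd_high ha hm hn₁
      (hdm.trans (mul_dvd_mul_left _ hn.1)) (hdm.trans (mul_dvd_mul_left _ hn.2.1))
      (hdm.trans (mul_dvd_mul_left _ hn.2.2))
  refine forall_sub_mem_insert_zero (P := fun δ => VanishesInPairs _ δ _ _ _)
    (fun t h => h.neg) ?_ ?_ ?_ ?_ ?_ ?_
  · rw [← mul_assoc, ← pow_add]
    exact high c₁ hc₁ hd₁
  · exact low c₂ hc₂ hc.2.1
  · exact low _ (hc₂.add_even (h2a.mul_right _)) (dvd_add hc.2.1 (hc.2.2.mul_left _))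
  · rw [← mul_sub]
    exact low _ ((h2a.mul_right _).sub_odd hc₂) (dvd_sub (hc.1.mul_left _) hc.2.1)
  · rw [← mul_sub]
    exact low _ ((h2a.mul_right _).sub_odd (hc₂.add_even (h2a.mul_right _)))
      (dvd_sub (hc.1.mul_left _) (dvd_add hc.2.1 (hc.2.2.mul_left _)))
  · rw [show 2 ^ C * c₂ - 2 ^ C * (c₂ + 2 ^ a * c₃) = 2 ^ (C + a) * -c₃ by ring]
    exact high _ hc₃.neg (by rwa [neg_mul, dvd_neg])

end NormalForm

lemma forall_sum_expFrac_eq_zero_of_hadamardNormalForm {A L : Finset ℤ} {R : ℤ}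
    (hL : L.card = 4) (h : HadamardNormalForm A L R) :
    ∀ b ∈ A, ∀ b' ∈ A, b ≠ b' → ∑ ℓ ∈ L, expFrac R ((b - b') * ℓ) = 0 := by
  obtain ⟨C, M, a, c₁, c₂, c₃, n₁, n₂, n₃, d, ha, hc₁, hc₂, hc₃, hn₁, hn₂, hn₃, rfl, rfl, rfl,
    hd₁, hd₂, hd₃, hd₄⟩ := h
  have hd : d ≠ 0 := by
    rintro rfl
    obtain ⟨k, hk⟩ := Int.gcd_dvd_left n₁ (Int.gcd n₂ n₃)
    exact Int.ne_zero_of_odd (hc₁.mul (Int.odd_mul.1 (hk ▸ hn₁)).1) (zero_dvd_iff.1 hd₁)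
  simp only [Finset.image_insert, Finset.image_singleton, mul_zero] at hL ⊢
  intro b hb b' hb' hbb
  rw [sum_expFrac_eq_zero_iff (mul_ne_zero (by positivity) hd) hL]
  exact forall_vanishesInPairs_of_dvd ha hc₁ hc₂ hc₃ hn₁ hn₂ hn₃ hd₁ hd₂ hd₃ hd₄ b hb b' hb' hbb

/-- characterization of the Hadamard pairs `(A, L)` of size `4` (both containing
`0`) with scaling factor `R ≥ 1`: `(1/R)·L` is a spectrum for `A` iff `R = 2^{C+M+a+1}·d`,
`A = 2^C·{0, 2^a c₁, c₂, c₂ + 2^a c₃}` and `L = 2^M·{0, n₁, n₁ + 2^a n₂, 2^a n₃}` with the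
`cᵢ, nᵢ` odd, `a ≥ 1`, `C, M ≥ 0`, and `d` divides `c₁n`, `c₃n`, `n₂c`, `n₃c`, where
`c = gcd(c₁,c₂,c₃)` and `n = gcd(n₁,n₂,n₃)`. -/
theorem hadamard_pair_size_four (A L : Finset ℤ) (hA : A.card = 4) (hL : L.card = 4)
    (h0A : (0 : ℤ) ∈ A) (h0L : (0 : ℤ) ∈ L) (R : ℤ) (hR : 1 ≤ R) :
    IsSpectrumFor A (L.image fun x : ℤ => (x : ℝ) / (R : ℝ)) ↔
    ∃ (C M : ℕ) (a : ℕ) (c₁ c₂ c₃ n₁ n₂ n₃ d : ℤ),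
      1 ≤ a ∧
      Odd c₁ ∧ Odd c₂ ∧ Odd c₃ ∧ Odd n₁ ∧ Odd n₂ ∧ Odd n₃ ∧
      R = 2 ^ (C + M + a + 1) * d ∧
      A = ({0, 2 ^ a * c₁, c₂, c₂ + 2 ^ a * c₃} : Finset ℤ).image (fun x => 2 ^ C * x) ∧
      L = ({0, n₁, n₁ + 2 ^ a * n₂, 2 ^ a * n₃} : Finset ℤ).image (fun x => 2 ^ M * x) ∧
      d ∣ c₁ * (Int.gcd n₁ (Int.gcd n₂ n₃) : ℤ) ∧
      d ∣ c₃ * (Int.gcd n₁ (Int.gcd n₂ n₃) : ℤ) ∧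
      d ∣ n₂ * (Int.gcd c₁ (Int.gcd c₂ c₃) : ℤ) ∧
      d ∣ n₃ * (Int.gcd c₁ (Int.gcd c₂ c₃) : ℤ) := by
  have hR0 : R ≠ 0 := by omega
  rw [isSpectrumFor_image_div_iff hR0 (hL.trans hA.symm)]
  refine ⟨fun h => ?_, forall_sum_expFrac_eq_zero_of_hadamardNormalForm hL⟩
  obtain ⟨u, v, w, rfl⟩ := Finset.exists_eq_insert_of_card_eq_four h0L hL
  obtain ⟨D, hD, hRD⟩ := exists_odd_eq_two_pow_mul hR0 rfl
  rw [hRD] at h hR0 ⊢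
  exact hadamardNormalForm_of_forall_vanishesInPairs hD h0A hA hL fun b hb b' hb' hbb =>
    (sum_expFrac_eq_zero_iff hR0 hL _).1 (h b hb b' hb' hbb)
end
end

section
/- Let A ⊂ ℤ be a finite set with |A| = N, spectral with spectrum Γ ⊂ ℝ. Let Ω = A + [0,1] ⊂ ℝ and Λ = Γ + ℤ. Then the functions (1/√N)·e^{2πiλx}, λ ∈ Λ, restricted to Ω, form an orthonormal basis (Hilbert basis) of L²(Ω); that is, Ω is a spectral subset of ℝ with spectrum Λ. -/
/-!
Up to a null set, `Ω` is the disjoint union of the translates `(0, 1] + a`, `a ∈ A`, so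
`∫_Ω F = ∑_a ∫_(0,1] F(t + a)`, and `e_{γ+n}(t + a) = e_γ(a) e_γ(t) e_n(t)` for `n, a ∈ ℤ`.
Hence `⟪e_{γ+n}, e_{γ'+n'}⟫ = (∑_a e_{γ'-γ}(a)) · ∫_(0,1] e_{γ'-γ+n'-n}`: the first factor is
`N δ_{γγ'}` because the square matrix `(e^{2πiγa})` with orthogonal rows also has orthogonal
columns, and for `γ = γ'` the second one is `δ_{nn'}`. If `g ⊥ e_{γ+n}` for every `n`, then
the periodization `t ↦ ∑_a e_{-γ}(t + a) g(t + a)` has vanishing Fourier coefficients on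
`(0, 1]`, hence vanishes; so for a.e. `t` the vector `(g(t + a))_a` lies in the kernel of the
invertible matrix `(e^{-2πiγa})`.
-/

open Complex Real MeasureTheory

noncomputable section

/-- The set `Ω = A + [0,1] ⊂ ℝ`. -/
def OmegaOf (A : Finset ℤ) : Set ℝ :=
  {x : ℝ | ∃ a ∈ A, ∃ y ∈ Set.Icc (0 : ℝ) 1, x = (a : ℝ) + y}

/-- The set `Λ = Γ + ℤ ⊂ ℝ`. -/
def LambdaOf (Γ : Finset ℝ) : Set ℝ :=
  {x : ℝ | ∃ γ ∈ Γ, ∃ n : ℤ, x = γ + (n : ℝ)}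

open Set Filter
open scoped Matrix ComplexConjugate

theorem Matrix.mul_eq_smul_one_comm_of_equiv {m n K : Type*} [Fintype m] [DecidableEq m]
    [Fintype n] [DecidableEq n] [Field K] {M : Matrix m n K} {B : Matrix n m K} (e : m ≃ n)
    {c : K} (hc : c ≠ 0) (h : M * B = c • 1) : B * M = c • 1 := by
  have hinv : M * (c⁻¹ • B) = 1 := by
    rw [Matrix.mul_smul, h, smul_smul, inv_mul_cancel₀ hc, one_smul]
  have := (Matrix.mul_eq_one_comm_of_equiv e).1 hinv
  rwa [Matrix.smul_mul, inv_smul_eq_iff₀ hc] at this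

def expFreq (ξ x : ℝ) : ℂ := Complex.exp (2 * π * I * ξ * x)

theorem expFreq_add_left (ξ η x : ℝ) : expFreq (ξ + η) x = expFreq ξ x * expFreq η x := by
  simp only [expFreq, ← Complex.exp_add]; push_cast; ring_nf

theorem expFreq_add_right (ξ x y : ℝ) : expFreq ξ (x + y) = expFreq ξ x * expFreq ξ y := by
  simp only [expFreq, ← Complex.exp_add]; push_cast; ring_nf

@[simp] theorem expFreq_zero_left (x : ℝ) : expFreq 0 x = 1 := by simp [expFreq]

theorem conj_expFreq (ξ x : ℝ) : conj (expFreq ξ x) = expFreq (-ξ) x := by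
  simp only [expFreq, ← Complex.exp_conj, map_mul, conj_I, conj_ofReal, map_ofNat]
  push_cast; ring_nf

theorem norm_expFreq (ξ x : ℝ) : ‖expFreq ξ x‖ = 1 := by
  simpa [expFreq, mul_comm _ I, ← mul_assoc] using Complex.norm_exp_ofReal_mul_I (2 * π * ξ * x)

theorem expFreq_ne_zero (ξ x : ℝ) : expFreq ξ x ≠ 0 := Complex.exp_ne_zero _

theorem expFreq_intCast_intCast (k m : ℤ) : expFreq k m = 1 := by
  rw [expFreq, ← Complex.exp_int_mul_two_pi_mul_I (k * m)]; push_cast; ring_nf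

theorem expFreq_add_intCast_intCast (ξ : ℝ) (k m : ℤ) : expFreq (ξ + k) m = expFreq ξ m := by
  rw [expFreq_add_left, expFreq_intCast_intCast, mul_one]

theorem expFreq_intCast_add_intCast (k m : ℤ) (x : ℝ) : expFreq k (x + m) = expFreq k x := by
  rw [expFreq_add_right, expFreq_intCast_intCast, mul_one]

theorem continuous_expFreq (ξ : ℝ) : Continuous (expFreq ξ) := by
  unfold expFreq; fun_prop

theorem ae_eq_zero_of_fourierCoeffOn_eq_zero {a b : ℝ} (hab : a < b) {f : ℝ → ℂ}
    (hf : MemLp f 2 (volume.restrict (Ioc a b))) (h : ∀ n, fourierCoeffOn hab f n = 0) :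
    f =ᵐ[volume.restrict (Ioc a b)] 0 := by
  have hsum := hasSum_sq_fourierCoeffOn hab hf
  simp only [h, norm_zero, ne_eq, OfNat.ofNat_ne_zero, not_false_eq_true, zero_pow] at hsum
  have hnorm : ∫ x in Ioc a b, ‖f x‖ ^ 2 = 0 := by
    have := hasSum_zero.unique hsum
    rwa [eq_comm, smul_eq_zero_iff_right (inv_ne_zero (sub_pos.2 hab).ne'),
      intervalIntegral.integral_of_le hab.le] at this
  rw [integral_eq_zero_iff_of_nonneg (fun _ => by positivity)
    ((memLp_two_iff_integrable_sq_norm hf.1).1 hf)] at hnorm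
  filter_upwards [hnorm] with x hx
  simpa using hx

theorem fourierCoeffOn_zero_one_eq_integral (f : ℝ → ℂ) (n : ℤ) :
    fourierCoeffOn zero_lt_one f n = ∫ t in Ioc (0 : ℝ) 1, conj (expFreq n t) * f t := by
  rw [fourierCoeffOn_eq_integral, intervalIntegral.integral_of_le zero_le_one]
  simp only [conj_expFreq]
  simp only [sub_zero, div_one, one_smul, smul_eq_mul, fourier_coe_apply, expFreq]
  push_cast
  ring_nf

theorem integral_Ioc_expFreq_intCast (k : ℤ) :
    ∫ t in Ioc (0 : ℝ) 1, expFreq k t = if k = 0 then 1 else 0 := by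
  split_ifs with hk
  · simp [hk]
  · have hc : 2 * π * I * k ≠ 0 := by simp [hk, Real.pi_ne_zero]
    rw [← intervalIntegral.integral_of_le zero_le_one]
    simp only [expFreq, ofReal_intCast]
    rw [integral_exp_mul_complex hc, ofReal_one, mul_one, ofReal_zero, mul_zero,
      show 2 * π * I * k = k * (2 * π * I) by ring, Complex.exp_int_mul_two_pi_mul_I]
    simp

section Lp

variable {μ : Measure ℝ} [IsFiniteMeasure μ]

theorem memLp_expFreq (p : ENNReal) (ξ : ℝ) : MemLp (expFreq ξ) p μ :=
  .of_bound (continuous_expFreq ξ).aestronglyMeasurable 1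
    (.of_forall fun x => (norm_expFreq ξ x).le)

variable (μ) in
def expFreqLp (ξ : ℝ) : Lp ℂ 2 μ := (memLp_expFreq 2 ξ).toLp

theorem coeFn_expFreqLp (ξ : ℝ) : expFreqLp μ ξ =ᵐ[μ] expFreq ξ := MemLp.coeFn_toLp _

theorem inner_expFreqLp (ξ : ℝ) (g : Lp ℂ 2 μ) :
    inner ℂ (expFreqLp μ ξ) g = ∫ x, conj (expFreq ξ x) * g x ∂μ := by
  rw [L2.inner_def]
  refine integral_congr_ae ?_
  filter_upwards [coeFn_expFreqLp ξ] with x hx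
  rw [hx, RCLike.inner_apply, mul_comm]

theorem inner_expFreqLp_expFreqLp (ξ ξ' : ℝ) :
    inner ℂ (expFreqLp μ ξ) (expFreqLp μ ξ') = ∫ x, expFreq (ξ' - ξ) x ∂μ := by
  rw [inner_expFreqLp]
  refine integral_congr_ae ?_
  filter_upwards [coeFn_expFreqLp ξ'] with x hx
  rw [hx, conj_expFreq, ← expFreq_add_left, neg_add_eq_sub]

end Lp

theorem omegaOf_eq_biUnion_Icc (A : Finset ℤ) : OmegaOf A = ⋃ a ∈ A, Icc (a : ℝ) (a + 1) := by
  ext x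
  simp only [OmegaOf, mem_ofPred_eq, mem_iUnion, mem_Icc, exists_prop]
  constructor
  · rintro ⟨a, ha, y, ⟨hy0, hy1⟩, rfl⟩
    exact ⟨a, ha, by linarith, by linarith⟩
  · rintro ⟨a, ha, h0, h1⟩
    exact ⟨a, ha, x - a, ⟨by linarith, by linarith⟩, by ring⟩

theorem map_add_restrict_Ioc_zero_one (a : ℝ) :
    (volume.restrict (Ioc (0 : ℝ) 1)).map (· + a) = volume.restrict (Ioc a (a + 1)) := by
  have := Measure.restrict_map (μ := volume) (measurable_add_const a)
    (measurableSet_Ioc (a := a) (b := a + 1))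
  rwa [Measure.IsAddRightInvariant.map_add_right_eq_self, preimage_add_const_Ioc, sub_self,
    add_sub_cancel_left, eq_comm] at this

theorem restrict_omegaOf_eq_sum (A : Finset ℤ) :
    volume.restrict (OmegaOf A) =
      Measure.sum fun a : A => (volume.restrict (Ioc (0 : ℝ) 1)).map (· + (a : ℝ)) := by
  have hae : OmegaOf A =ᵐ[volume] ⋃ a ∈ A, Ioc (a : ℝ) (a + 1) := by
    rw [omegaOf_eq_biUnion_Icc]
    exact ae_eq_set_biUnion A.countable_toSet fun _ _ => Ioc_ae_eq_Icc.symm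
  have hdisj :
      (A : Set ℤ).Pairwise (Function.onFun Disjoint fun a : ℤ => Ioc (a : ℝ) (a + 1)) := by
    simpa using (pairwise_disjoint_Ioc_add_intCast (0 : ℝ)).set_pairwise (A : Set ℤ)
  rw [Measure.restrict_congr_set hae,
    Measure.restrict_biUnion_finset hdisj fun _ => measurableSet_Ioc]
  simp only [map_add_restrict_Ioc_zero_one]

instance (A : Finset ℤ) : IsFiniteMeasure (volume.restrict (OmegaOf A)) := by
  rw [restrict_omegaOf_eq_sum, Measure.sum_fintype]
  infer_instance

section OmegaOf

variable {A : Finset ℤ}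

theorem ae_restrict_omegaOf_iff {p : ℝ → Prop} :
    (∀ᵐ x ∂volume.restrict (OmegaOf A), p x) ↔
      ∀ a ∈ A, ∀ᵐ t ∂volume.restrict (Ioc (0 : ℝ) 1), p (t + a) := by
  simp [restrict_omegaOf_eq_sum, (measurableEmbedding_addRight _).ae_map_iff]

theorem MeasureTheory.MemLp.comp_add_of_omegaOf {E : Type*} [NormedAddCommGroup E] {F : ℝ → E}
    {p : ENNReal} (hF : MemLp F p (volume.restrict (OmegaOf A))) {a : ℤ} (ha : a ∈ A) :
    MemLp (fun t => F (t + a)) p (volume.restrict (Ioc (0 : ℝ) 1)) := by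
  rw [restrict_omegaOf_eq_sum] at hF
  exact (measurableEmbedding_addRight _).memLp_map_measure_iff.1
    (hF.mono_measure (Measure.le_sum _ (⟨a, ha⟩ : A)))

theorem integral_omegaOf {E : Type*} [NormedAddCommGroup E] [NormedSpace ℝ E] {F : ℝ → E}
    (hF : Integrable F (volume.restrict (OmegaOf A))) :
    ∫ x in OmegaOf A, F x = ∑ a ∈ A, ∫ t in Ioc (0 : ℝ) 1, F (t + a) := by
  rw [restrict_omegaOf_eq_sum] at hF ⊢
  rw [integral_sum_measure hF, tsum_fintype]
  simp only [(measurableEmbedding_addRight _).integral_map]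
  exact Finset.sum_coe_sort A fun a : ℤ => ∫ t in Ioc (0 : ℝ) 1, F (t + a)

theorem integral_omegaOf_expFreq (ξ : ℝ) :
    ∫ x in OmegaOf A, expFreq ξ x =
      (∑ a ∈ A, expFreq ξ a) * ∫ t in Ioc (0 : ℝ) 1, expFreq ξ t := by
  rw [integral_omegaOf ((memLp_expFreq 1 ξ).integrable le_rfl), Finset.sum_mul]
  refine Finset.sum_congr rfl fun a _ => ?_
  simp only [expFreq_add_right, integral_mul_const, mul_comm]

end OmegaOf

namespace IsSpectrumFor

variable {A : Finset ℤ} {Γ : Finset ℝ}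

theorem sum_expFreq_mul_conj (h : IsSpectrumFor A Γ) {a a' : ℤ} (ha : a ∈ A) (ha' : a' ∈ A) :
    ∑ γ ∈ Γ, expFreq γ a * conj (expFreq γ a') = if a = a' then (A.card : ℂ) else 0 := by
  rw [← h.2 a ha a' ha']
  refine Finset.sum_congr rfl fun γ _ => ?_
  rw [conj_expFreq, expFreq, expFreq, ← Complex.exp_add]
  push_cast; ring_nf

theorem eq_zero_of_sum_conj_expFreq_mul_eq_zero (h : IsSpectrumFor A Γ) {w : ℤ → ℂ}
    (hw : ∀ γ ∈ Γ, ∑ a ∈ A, conj (expFreq γ a) * w a = 0) {a : ℤ} (ha : a ∈ A) : w a = 0 := by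
  have hN : (A.card : ℂ) ≠ 0 := by exact_mod_cast (Finset.card_pos.2 ⟨a, ha⟩).ne'
  refine (mul_eq_zero.1 ?_).resolve_left hN
  calc (A.card : ℂ) * w a = ∑ a' ∈ A, (if a = a' then (A.card : ℂ) else 0) * w a' := by
        simp [ha]
    _ = ∑ γ ∈ Γ, expFreq γ a * ∑ a' ∈ A, conj (expFreq γ a') * w a' := by
        simp only [Finset.mul_sum, ← mul_assoc]
        rw [Finset.sum_comm]
        refine Finset.sum_congr rfl fun a' ha' => ?_
        rw [← h.sum_expFreq_mul_conj ha ha', Finset.sum_mul]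
    _ = 0 := Finset.sum_eq_zero fun γ hγ => by rw [hw γ hγ, mul_zero]

theorem sum_expFreq_sub (h : IsSpectrumFor A Γ) {γ γ' : ℝ} (hγ : γ ∈ Γ) (hγ' : γ' ∈ Γ) :
    ∑ a ∈ A, expFreq (γ' - γ) a = if γ = γ' then (A.card : ℂ) else 0 := by
  classical
  have hN : (A.card : ℂ) ≠ 0 := by
    rw [← h.1]; exact_mod_cast (Finset.card_pos.2 ⟨γ, hγ⟩).ne'
  let M : Matrix A Γ ℂ := Matrix.of fun a γ => expFreq γ a
  have hM : M * Mᴴ = (A.card : ℂ) • 1 := by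
    ext a a'
    simp only [Matrix.mul_apply, Matrix.conjTranspose_apply, M, Matrix.of_apply, Complex.star_def,
      Matrix.smul_apply, Matrix.one_apply, smul_eq_mul, Subtype.ext_iff, mul_ite, mul_one, mul_zero]
    exact (Finset.sum_coe_sort Γ _).trans (h.sum_expFreq_mul_conj a.2 a'.2)
  have e : A ≃ Γ := Fintype.equivOfCardEq (by simp [h.1])
  have := congr_fun₂ (Matrix.mul_eq_smul_one_comm_of_equiv e hN hM) ⟨γ, hγ⟩ ⟨γ', hγ'⟩
  simp only [Matrix.mul_apply, Matrix.conjTranspose_apply, M, Matrix.of_apply, Complex.star_def,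
      Matrix.smul_apply, Matrix.one_apply, smul_eq_mul, Subtype.mk.injEq, mul_ite, mul_one,
      mul_zero, conj_expFreq, ← expFreq_add_left, neg_add_eq_sub] at this
  exact (Finset.sum_coe_sort A (fun a : ℤ => expFreq (γ' - γ) a)).symm.trans this

theorem card_pos_of_mem_lambdaOf (h : IsSpectrumFor A Γ) {ξ : ℝ} (hξ : ξ ∈ LambdaOf Γ) :
    0 < A.card := by
  obtain ⟨γ, hγ, -⟩ := hξ
  rw [← h.1]
  exact Finset.card_pos.2 ⟨γ, hγ⟩

theorem integral_omegaOf_expFreq_sub (h : IsSpectrumFor A Γ) {ξ ξ' : ℝ} (hξ : ξ ∈ LambdaOf Γ)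
    (hξ' : ξ' ∈ LambdaOf Γ) :
    ∫ x in OmegaOf A, expFreq (ξ' - ξ) x = if ξ = ξ' then (A.card : ℂ) else 0 := by
  rw [integral_omegaOf_expFreq]
  split_ifs with heq
  · simp [heq]
  obtain ⟨γ, hγ, n, rfl⟩ := hξ
  obtain ⟨γ', hγ', n', rfl⟩ := hξ'
  rw [show γ' + n' - (γ + n) = (γ' - γ) + ((n' - n : ℤ) : ℝ) by push_cast; ring]
  by_cases hγγ' : γ = γ'
  · have hn : n' - n ≠ 0 := fun hn => heq (by rw [hγγ', sub_eq_zero.1 hn])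
    rw [hγγ', sub_self, zero_add, integral_Ioc_expFreq_intCast, if_neg hn, mul_zero]
  · simp only [expFreq_add_intCast_intCast]
    rw [h.sum_expFreq_sub hγ hγ', if_neg hγγ', zero_mul]

theorem ae_eq_zero_of_forall_integral_conj_expFreq_mul_eq_zero (h : IsSpectrumFor A Γ)
    {g : ℝ → ℂ} (hg : MemLp g 2 (volume.restrict (OmegaOf A)))
    (horth : ∀ ξ ∈ LambdaOf Γ, ∫ x in OmegaOf A, conj (expFreq ξ x) * g x = 0) :
    g =ᵐ[volume.restrict (OmegaOf A)] 0 := by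
  set F : ℝ → ℝ → ℂ := fun ξ x => conj (expFreq ξ x) * g x with hF_def
  have hF : ∀ ξ, MemLp (F ξ) 2 (volume.restrict (OmegaOf A)) := fun ξ => by
    simp only [hF_def, conj_expFreq]
    exact hg.mul' (memLp_expFreq ⊤ (-ξ))
  have hperiodized : ∀ γ ∈ Γ,
      (fun t => ∑ a ∈ A, F γ (t + a)) =ᵐ[volume.restrict (Ioc (0 : ℝ) 1)] 0 := by
    intro γ hγ
    refine ae_eq_zero_of_fourierCoeffOn_eq_zero zero_lt_one
      (memLp_finsetSum A fun a ha => (hF γ).comp_add_of_omegaOf ha) fun n => ?_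
    calc fourierCoeffOn zero_lt_one (fun t => ∑ a ∈ A, F γ (t + a)) n
        = ∑ a ∈ A, ∫ t in Ioc (0 : ℝ) 1, F (γ + n) (t + a) := by
          rw [fourierCoeffOn_zero_one_eq_integral, ← integral_finsetSum _ fun a ha =>
            ((hF _).comp_add_of_omegaOf ha).integrable one_le_two]
          refine setIntegral_congr_fun measurableSet_Ioc fun t _ => ?_
          rw [Finset.mul_sum]
          refine Finset.sum_congr rfl fun a _ => ?_
          simp only [hF_def, expFreq_add_left, expFreq_intCast_add_intCast, map_mul]
          ring
      _ = 0 := by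
          rw [← integral_omegaOf ((hF _).integrable one_le_two)]
          exact horth _ ⟨γ, hγ, n, rfl⟩
  have hshift : ∀ᵐ t ∂volume.restrict (Ioc (0 : ℝ) 1), ∀ a ∈ A, g (t + a) = 0 := by
    filter_upwards [(eventually_all_finset Γ).2 hperiodized] with t ht a ha
    refine h.eq_zero_of_sum_conj_expFreq_mul_eq_zero (w := fun a => g (t + a)) (fun γ hγ => ?_) ha
    have := ht γ hγ
    simp only [hF_def, expFreq_add_right, map_mul, mul_assoc, ← Finset.mul_sum,
      Pi.zero_apply] at this
    exact (mul_eq_zero.1 this).resolve_left (by simp [expFreq_ne_zero])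
  exact ae_restrict_omegaOf_iff.2 fun a ha => hshift.mono fun t ht => ht a ha

end IsSpectrumFor

theorem union_of_intervals_spectral_general (A : Finset ℤ) (Γ : Finset ℝ) (h : IsSpectrumFor A Γ) :
    ∃ f : LambdaOf Γ → Lp ℂ 2 (volume.restrict (OmegaOf A)),
      (∀ l : LambdaOf Γ,
        (f l : ℝ → ℂ) =ᵐ[volume.restrict (OmegaOf A)]
          fun x : ℝ => ((1 / Real.sqrt A.card : ℝ) : ℂ) *
            Complex.exp (2 * Real.pi * Complex.I * ((l : ℝ) : ℂ) * (x : ℂ))) ∧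
      Orthonormal ℂ f ∧
      (Submodule.span ℂ (Set.range f)).topologicalClosure = ⊤ := by
  set c : ℝ := 1 / Real.sqrt A.card
  refine ⟨fun l => (c : ℂ) • expFreqLp _ l, fun l => ?_, ?_, ?_⟩
  · filter_upwards [Lp.coeFn_smul (c : ℂ) (expFreqLp _ (l : ℝ)), coeFn_expFreqLp (l : ℝ)]
      with x hsmul hexp
    rw [hsmul, Pi.smul_apply, hexp, smul_eq_mul, expFreq]
  · rw [orthonormal_iff_ite]
    rintro ⟨ξ, hξ⟩ ⟨ξ', hξ'⟩
    rw [inner_smul_left, inner_smul_right, inner_expFreqLp_expFreqLp,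
      h.integral_omegaOf_expFreq_sub hξ hξ']
    simp only [Subtype.mk.injEq]
    split_ifs
    · have hN : (0 : ℝ) < A.card := mod_cast h.card_pos_of_mem_lambdaOf hξ
      rw [conj_ofReal, ← mul_assoc, ← ofReal_mul, ← ofReal_natCast, ← ofReal_mul, ofReal_eq_one]
      simp only [c]
      field_simp
      rw [Real.sq_sqrt hN.le]
    · rw [mul_zero, mul_zero]
  · rw [Submodule.topologicalClosure_eq_top_iff, Submodule.eq_bot_iff]
    intro g hg
    refine Lp.eq_zero_iff_ae_eq_zero.2 <|
      h.ae_eq_zero_of_forall_integral_conj_expFreq_mul_eq_zero (Lp.memLp g) fun ξ hξ => ?_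
    have := (Submodule.mem_orthogonal _ g).1 hg _ (Submodule.subset_span ⟨⟨ξ, hξ⟩, rfl⟩)
    have hc : conj (c : ℂ) ≠ 0 := by simpa [c] using (h.card_pos_of_mem_lambdaOf hξ).ne'
    rwa [inner_smul_left, inner_expFreqLp, mul_eq_zero, or_iff_right hc] at this

/-- if `A ⊂ ℤ`, `|A| = N`, is spectral with spectrum `Γ`, then
`Ω = A + [0,1]` is a spectral subset of `ℝ` with spectrum `Λ = Γ + ℤ`: the functions
`(1/√N)·e^{2πiλx}`, `λ ∈ Λ`, form an orthonormal basis (Hilbert basis) of `L²(Ω)`. -/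
theorem union_of_intervals_spectral (A : Finset ℤ) (hA : A.Nonempty)
    (Γ : Finset ℝ) (h : IsSpectrumFor A Γ) :
    ∃ f : LambdaOf Γ → Lp ℂ 2 (volume.restrict (OmegaOf A)),
      (∀ l : LambdaOf Γ,
        (f l : ℝ → ℂ) =ᵐ[volume.restrict (OmegaOf A)]
          fun x : ℝ => ((1 / Real.sqrt A.card : ℝ) : ℂ) *
            Complex.exp (2 * Real.pi * Complex.I * ((l : ℝ) : ℂ) * (x : ℂ))) ∧
      Orthonormal ℂ f ∧
      (Submodule.span ℂ (Set.range f)).topologicalClosure = ⊤ :=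
  union_of_intervals_spectral_general A Γ h
end
end

section
/- Let Ω be a bounded Lebesgue measurable subset of ℝ of positive measure, and let U : ℝ → U(L²(Ω)) be a one-parameter group of unitary operators on L²(Ω) (U(s+t) = U(s)U(t), U(0) = I) such that for every f ∈ L²(Ω) and every t ∈ ℝ, (U(t)f)(x) = f(x+t) for almost every x ∈ Ω ∩ (Ω − t). If E ⊂ Ω is Lebesgue measurable and t_0 ∈ ℝ satisfies E + t_0 ⊂ Ω, then U(−t_0)χ_E = χ_{E+t_0} in L²(Ω). -/
open MeasureTheory
open scoped ENNReal

/-!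
On `F = E + t₀ ⊆ Ω`, locality gives `U(-t₀)χ_E (x) = χ_E(x - t₀) = 1` for a.e. `x ∈ F`.
Since `U(-t₀)` is an isometry and translation preserves Lebesgue measure,
`‖U(-t₀)χ_E‖² = |E| = |F|`, so the whole mass of `U(-t₀)χ_E` is already carried by `F`
and it must vanish a.e. off `F`.
-/

theorem ae_eq_indicator_of_ae_eq_const_of_eLpNorm_le {α β : Type*} {m : MeasurableSpace α}
    {μ : Measure α} [NormedAddCommGroup β] {p : ℝ≥0∞} (hp0 : p ≠ 0) (hp : p ≠ ∞)
    {f : α → β} {F : Set α} {c : β} (hF : MeasurableSet F) (hf : AEStronglyMeasurable f μ)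
    (hfF : f =ᵐ[μ.restrict F] fun _ => c)
    (hnorm : eLpNorm f p μ ≤ eLpNorm (F.indicator fun _ => c) p μ)
    (hfin : eLpNorm (F.indicator fun _ => c) p μ ≠ ∞) :
    f =ᵐ[μ] F.indicator fun _ => c := by
  have hq : 0 < p.toReal := ENNReal.toReal_pos hp0 hp
  have hind : (fun x => ‖F.indicator (fun _ => c) x‖ₑ ^ p.toReal) =
      F.indicator fun _ => ‖c‖ₑ ^ p.toReal := by
    ext x
    by_cases hx : x ∈ F <;> simp [hx, hq]
  have hon : ∫⁻ x in F, ‖f x‖ₑ ^ p.toReal ∂μ =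
      ∫⁻ x, ‖F.indicator (fun _ => c) x‖ₑ ^ p.toReal ∂μ := by
    rw [hind, lintegral_indicator hF]
    exact lintegral_congr_ae (hfF.mono fun x hx => by simp only [hx])
  have hle : ∫⁻ x, ‖f x‖ₑ ^ p.toReal ∂μ ≤ ∫⁻ x, ‖F.indicator (fun _ => c) x‖ₑ ^ p.toReal ∂μ := by
    rwa [eLpNorm_eq_lintegral_rpow_enorm_toReal hp0 hp,
      eLpNorm_eq_lintegral_rpow_enorm_toReal hp0 hp, ENNReal.rpow_le_rpow_iff (by positivity)]
      at hnorm
  have hout : ∫⁻ x in Fᶜ, ‖f x‖ₑ ^ p.toReal ∂μ = 0 := by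
    rw [← lintegral_add_compl _ hF, hon] at hle
    have hfin' := (lintegral_rpow_enorm_lt_top_of_eLpNorm_lt_top hp0 hp hfin.lt_top).ne
    exact nonpos_iff_eq_zero.1
      ((ENNReal.add_le_add_iff_left hfin').1 (hle.trans_eq (add_zero _).symm))
  have hfFc : f =ᵐ[μ.restrict Fᶜ] 0 := by
    filter_upwards [(lintegral_eq_zero_iff' (hf.restrict.enorm.pow_const _)).1 hout] with x hx
    simpa [hq] using hx
  have h := (ae_restrict_union_iff F Fᶜ _).2 ⟨hfF.trans (indicator_ae_eq_restrict hF).symm,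
    hfFc.trans (indicator_ae_eq_restrict_compl hF).symm⟩
  rwa [Set.union_compl_self, Measure.restrict_univ] at h

theorem ae_eq_comp_add_right_restrict_preimage {G δ : Type*} [MeasurableSpace G] [AddGroup G]
    [MeasurableAdd G] {μ : Measure G} [μ.IsAddRightInvariant] {E : Set G}
    (hE : MeasurableSet E) (t : G) {f g : G → δ} (h : f =ᵐ[μ.restrict E] g) :
    (fun x => f (x + t)) =ᵐ[μ.restrict ((· + t) ⁻¹' E)] fun x => g (x + t) :=
  ((measurePreserving_add_right μ t).restrict_preimage hE).quasiMeasurePreserving.ae_eq_comp h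

theorem local_translation_of_indicator_general (Ω : Set ℝ)
    (U : ℝ → (Lp ℂ 2 (volume.restrict Ω) ≃ₗᵢ[ℂ] Lp ℂ 2 (volume.restrict Ω)))
    (hUloc : ∀ (f : Lp ℂ 2 (volume.restrict Ω)) (t : ℝ),
      ∀ᵐ x ∂(volume.restrict Ω), x + t ∈ Ω → (U t f : ℝ → ℂ) x = (f : ℝ → ℂ) (x + t))
    (E : Set ℝ) (hE : MeasurableSet E) (hEΩ : E ⊆ Ω) (t₀ : ℝ)
    (hEt₀ : (fun x => x + t₀) '' E ⊆ Ω)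
    (g : Lp ℂ 2 (volume.restrict Ω))
    (hg : (g : ℝ → ℂ) =ᵐ[volume.restrict Ω] Set.indicator E fun _ => (1 : ℂ)) :
    (U (-t₀) g : ℝ → ℂ) =ᵐ[volume.restrict Ω]
      Set.indicator ((fun x => x + t₀) '' E) fun _ => (1 : ℂ) := by
  set F := (fun x => x + t₀) '' E
  have hFE : F = (· + -t₀) ⁻¹' E := Set.image_add_right
  have hF : MeasurableSet F := hFE ▸ hE.preimage (measurable_add_const _)
  have hgE : (g : ℝ → ℂ) =ᵐ[volume.restrict E] fun _ => 1 := by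
    filter_upwards [ae_restrict_of_ae_restrict_of_subset hEΩ hg, ae_restrict_mem hE] with x hx hxE
    rw [hx, Set.indicator_of_mem hxE]
  have hUgF : (U (-t₀) g : ℝ → ℂ) =ᵐ[volume.restrict F] fun _ => 1 := by
    filter_upwards [ae_restrict_of_ae_restrict_of_subset hEt₀ (hUloc g (-t₀)),
      hFE ▸ ae_eq_comp_add_right_restrict_preimage hE (-t₀) hgE, ae_restrict_mem hF]
      with x hloc hshift hxF
    rw [hFE] at hxF
    exact (hloc (hEΩ hxF)).trans hshift
  have hvol : volume.restrict Ω F = volume.restrict Ω E := by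
    rw [Measure.restrict_apply hF, Measure.restrict_apply hE, Set.inter_eq_left.2 hEt₀,
      Set.inter_eq_left.2 hEΩ, hFE, measure_preimage_add_right]
  have hnorm : eLpNorm (U (-t₀) g : ℝ → ℂ) 2 (volume.restrict Ω) =
      eLpNorm (F.indicator fun _ => (1 : ℂ)) 2 (volume.restrict Ω) := by
    rw [← Lp.enorm_def, LinearIsometryEquiv.enorm_map, Lp.enorm_def, eLpNorm_congr_ae hg,
      eLpNorm_indicator_const hE two_ne_zero ENNReal.ofNat_ne_top,
      eLpNorm_indicator_const hF two_ne_zero ENNReal.ofNat_ne_top, hvol]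
  rw [← Set.inter_eq_left.2 hEt₀, ← Measure.restrict_restrict hF] at hUgF
  exact ae_eq_indicator_of_ae_eq_const_of_eLpNorm_le two_ne_zero ENNReal.ofNat_ne_top hF
    (Lp.aestronglyMeasurable _) hUgF hnorm.le (hnorm ▸ Lp.eLpNorm_ne_top _)

/-- let `Ω ⊂ ℝ` be bounded, measurable, of positive measure, and let
`(U(t))_{t∈ℝ}` be a one-parameter group of unitary operators on `L²(Ω)` acting as local
translations: `(U(t)f)(x) = f(x+t)` for a.e. `x ∈ Ω ∩ (Ω − t)`. If `E ⊆ Ω` is measurable and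
`E + t₀ ⊆ Ω`, then `U(−t₀)χ_E = χ_{E+t₀}` in `L²(Ω)`. -/
theorem local_translation_of_indicator (Ω : Set ℝ)
    (hΩb : Bornology.IsBounded Ω) (hΩm : MeasurableSet Ω)
    (hΩpos : 0 < volume Ω)
    (U : ℝ → (Lp ℂ 2 (volume.restrict Ω) ≃ₗᵢ[ℂ] Lp ℂ 2 (volume.restrict Ω)))
    (hUgroup : ∀ (s t : ℝ) (f : Lp ℂ 2 (volume.restrict Ω)), U (s + t) f = U s (U t f))
    (hUid : ∀ f : Lp ℂ 2 (volume.restrict Ω), U 0 f = f)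
    (hUloc : ∀ (f : Lp ℂ 2 (volume.restrict Ω)) (t : ℝ),
      ∀ᵐ x ∂(volume.restrict Ω), x + t ∈ Ω → (U t f : ℝ → ℂ) x = (f : ℝ → ℂ) (x + t))
    (E : Set ℝ) (hE : MeasurableSet E) (hEΩ : E ⊆ Ω) (t₀ : ℝ)
    (hEt₀ : (fun x => x + t₀) '' E ⊆ Ω)
    (g : Lp ℂ 2 (volume.restrict Ω))
    (hg : (g : ℝ → ℂ) =ᵐ[volume.restrict Ω] Set.indicator E fun _ => (1 : ℂ)) :
    (U (-t₀) g : ℝ → ℂ) =ᵐ[volume.restrict Ω]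
      Set.indicator ((fun x => x + t₀) '' E) fun _ => (1 : ℂ) :=
  local_translation_of_indicator_general Ω U hUloc E hE hEΩ t₀ hEt₀ g hg
end

section
/- Let Ω be a bounded Lebesgue measurable subset of ℝ of finite positive measure |Ω|, and let Λ ⊂ ℝ be such that the functions |Ω|^{−1/2}·e^{2πiλx}, λ ∈ Λ, form an orthonormal basis of L²(Ω). For t ∈ ℝ let U_Λ(t) be the unique bounded operator on L²(Ω) with U_Λ(t)e_λ = e^{2πiλt}·e_λ for all λ ∈ Λ, where e_λ(x) = e^{2πiλx}. Then each U_Λ(t) is unitary, U_Λ is a one-parameter group, and for every f ∈ L²(Ω) and every t ∈ ℝ, (U_Λ(t)f)(x) = f(x+t) for almost every x ∈ Ω ∩ (Ω − t); that is, U_Λ is a unitary group of local translations on Ω. -/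
/-!
In the orthonormal basis `e_λ`, the operator `U_Λ(t)` is the diagonal multiplication by the
unimodular numbers `e^{2πiλt}`, so it is unitary and `t ↦ U_Λ(t)` is a group homomorphism.
Each `e_λ` is an eigenfunction of translation by `t`, with the same eigenvalue `e^{2πiλt}`, so
`U_Λ(t)` and the translation `f ↦ f(· + t)` agree on every `e_λ` as maps into
`L²(Ω ∩ (Ω - t))`. Both maps are continuous and the `e_λ` span a dense subspace, so they agree
on all of `L²(Ω)`.
-/

open Complex Real MeasureTheory
open scoped ENNReal

noncomputable section

namespace lp

variable {ι : Type*} {E : ι → Type*} [∀ i, NormedAddCommGroup (E i)] [∀ i, NormedSpace ℂ (E i)]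
  {p : ℝ≥0∞}

theorem _root_.Memℓp.circle_smul (c : ι → Circle) {f : ∀ i, E i} (hf : Memℓp f p) :
    Memℓp (c • f) p :=
  hf.mono' fun i => (Circle.norm_smul (c i) (f i)).le

def circleSMul [Fact (1 ≤ p)] : (ι → Circle) →* (lp E p ≃ₗᵢ[ℂ] lp E p) where
  toFun c :=
    { toFun f := ⟨c • ⇑f, (lp.memℓp f).circle_smul c⟩
      invFun f := ⟨c⁻¹ • ⇑f, (lp.memℓp f).circle_smul c⁻¹⟩
      map_add' f g := lp.ext <| smul_add c (⇑f) g
      map_smul' a f := lp.ext <| funext fun i => smul_comm (c i) a (f i)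
      left_inv f := lp.ext <| inv_smul_smul c (⇑f)
      right_inv f := lp.ext <| smul_inv_smul c (⇑f)
      norm_map' f := by
        have hp : p ≠ 0 := (zero_lt_one.trans_le Fact.out).ne'
        exact le_antisymm (norm_mono hp fun i => (Circle.norm_smul (c i) (f i)).le)
          (norm_mono hp fun i => (Circle.norm_smul (c i) (f i)).ge) }
  map_one' := by ext; simp
  map_mul' c d := by ext; simp [mul_smul]

theorem coeFn_circleSMul [Fact (1 ≤ p)] (c : ι → Circle) (f : lp E p) :
    ⇑(circleSMul c f) = c • ⇑f :=
  rfl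

end lp

namespace HilbertBasis

variable {ι H : Type*} [NormedAddCommGroup H] [InnerProductSpace ℂ H]

def diagonal (b : HilbertBasis ι ℂ H) : (ι → Circle) →* (H ≃ₗᵢ[ℂ] H) where
  toFun c := b.repr.trans ((lp.circleSMul c).trans b.repr.symm)
  map_one' := by ext; simp
  map_mul' c d := by ext; simp

theorem diagonal_apply_self (b : HilbertBasis ι ℂ H) (c : ι → Circle) (i : ι) :
    b.diagonal c (b i) = c i • b i := by
  classical
  apply b.repr.injective
  ext j
  simp only [diagonal, MonoidHom.coe_mk, OneHom.coe_mk, LinearIsometryEquiv.trans_apply,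
    LinearIsometryEquiv.apply_symm_apply, lp.coeFn_circleSMul, Pi.smul_apply']
  rw [Circle.smul_def, Circle.smul_def, map_smul, lp.coeFn_smul, Pi.smul_apply]
  rcases eq_or_ne j i with rfl | hji
  · rfl
  · simp [b.repr_apply_apply, b.orthonormal.inner_eq_zero hji]

end HilbertBasis

namespace MeasureTheory

variable {α E 𝕜 : Type*} [MeasurableSpace α] [NormedAddCommGroup E] [NormedRing 𝕜] [Module 𝕜 E]
  [IsBoundedSMul 𝕜 E] {p : ℝ≥0∞}

def Lp.monoMeasureCLM [Fact (1 ≤ p)] {μ ν : Measure α} (hνμ : ν ≤ μ) :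
    Lp E p μ →L[𝕜] Lp E p ν :=
  LinearMap.mkContinuous
    { toFun f := ((Lp.memLp f).mono_measure hνμ).toLp f
      map_add' f g := by
        rw [← MemLp.toLp_add]
        exact MemLp.toLp_congr _ _ ((Lp.coeFn_add f g).filter_mono (ae_mono hνμ))
      map_smul' a f := by
        rw [RingHom.id_apply, ← MemLp.toLp_const_smul]
        exact MemLp.toLp_congr _ _ ((Lp.coeFn_smul a f).filter_mono (ae_mono hνμ)) }
    1 fun f => by
      rw [one_mul, LinearMap.coe_mk, AddHom.coe_mk,
        Lp.norm_toLp _ ((Lp.memLp f).mono_measure hνμ), Lp.norm_def]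
      exact ENNReal.toReal_mono (Lp.eLpNorm_ne_top f) (eLpNorm_mono_measure _ hνμ)

theorem Lp.coeFn_monoMeasureCLM [Fact (1 ≤ p)] {μ ν : Measure α} (hνμ : ν ≤ μ) (f : Lp E p μ) :
    Lp.monoMeasureCLM (𝕜 := 𝕜) hνμ f =ᵐ[ν] f :=
  MemLp.coeFn_toLp ((Lp.memLp f).mono_measure hνμ)

theorem Measure.restrict_restrict_le (μ : Measure α) (s u : Set α) :
    (μ.restrict s).restrict u ≤ μ.restrict u :=
  Measure.restrict_mono subset_rfl Measure.restrict_le_self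

variable {G : Type*} [AddGroup G] [MeasurableSpace G] [MeasurableAdd G] {μ : Measure G}
  [μ.IsAddRightInvariant] (Ω : Set G) (t : G)

theorem measurePreserving_add_right_restrict_preimage :
    MeasurePreserving (· + t) (μ.restrict ((· + t) ⁻¹' Ω)) (μ.restrict Ω) :=
  (measurePreserving_add_right μ t).restrict_preimage_emb
    (MeasurableEquiv.addRight t).measurableEmbedding Ω

theorem ae_eq_comp_add_right_of_ae_eq_restrict {β : Type*} {f g : G → β}
    (h : f =ᵐ[μ.restrict Ω] g) :
    (fun x => f (x + t)) =ᵐ[(μ.restrict Ω).restrict ((· + t) ⁻¹' Ω)] fun x => g (x + t) :=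
  ((measurePreserving_add_right_restrict_preimage Ω t).quasiMeasurePreserving.ae_eq_comp
    h).filter_mono (ae_mono (Measure.restrict_restrict_le _ _ _))

variable (𝕜) in
/-- The overlap `Ω ∩ (Ω - t)` is encoded by restricting `μ.restrict Ω` again, rather than by an
intersection, so that no measurability of `Ω` is needed. -/
def Lp.translateOverlapCLM [Fact (1 ≤ p)] :
    Lp E p (μ.restrict Ω) →L[𝕜] Lp E p ((μ.restrict Ω).restrict ((· + t) ⁻¹' Ω)) :=
  (Lp.monoMeasureCLM (Measure.restrict_restrict_le _ _ _)).comp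
    (Lp.compMeasurePreservingₗᵢ 𝕜 (· + t)
      (measurePreserving_add_right_restrict_preimage Ω t)).toContinuousLinearMap

theorem Lp.coeFn_translateOverlapCLM [Fact (1 ≤ p)] (f : Lp E p (μ.restrict Ω)) :
    Lp.translateOverlapCLM 𝕜 Ω t f =ᵐ[(μ.restrict Ω).restrict ((· + t) ⁻¹' Ω)]
      fun x => f (x + t) :=
  (Lp.coeFn_monoMeasureCLM (𝕜 := 𝕜) (Measure.restrict_restrict_le _ _ _) _).trans <|
    (Lp.coeFn_compMeasurePreserving f _).filter_mono
      (ae_mono (Measure.restrict_restrict_le _ _ _))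

theorem Lp.ae_apply_eq_apply_add_of_dense_span [Fact (1 ≤ p)]
    (V : Lp E p (μ.restrict Ω) →L[𝕜] Lp E p (μ.restrict Ω)) {S : Set (Lp E p (μ.restrict Ω))}
    (hS : (Submodule.span 𝕜 S).topologicalClosure = ⊤)
    (hV : ∀ g ∈ S, V g =ᵐ[(μ.restrict Ω).restrict ((· + t) ⁻¹' Ω)] fun x => g (x + t))
    (f : Lp E p (μ.restrict Ω)) :
    ∀ᵐ x ∂μ.restrict Ω, x + t ∈ Ω → V f x = f (x + t) := by
  set A := (LpToLpRestrictCLM G E 𝕜 (μ.restrict Ω) p ((· + t) ⁻¹' Ω)).comp V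
  have hA (g) : A g =ᵐ[(μ.restrict Ω).restrict ((· + t) ⁻¹' Ω)] V g :=
    LpToLpRestrictCLM_coeFn 𝕜 _ (V g)
  have hAB : A = Lp.translateOverlapCLM 𝕜 Ω t :=
    ContinuousLinearMap.ext_on (Submodule.dense_iff_topologicalClosure_eq_top.2 hS)
      fun g hg => Lp.ext <| ((hA g).trans (hV g hg)).trans (coeFn_translateOverlapCLM Ω t g).symm
  refine ae_imp_of_ae_restrict ((hA f).symm.trans ?_)
  rw [hAB]
  exact coeFn_translateOverlapCLM Ω t f

theorem Lp.coeFn_smul_ae_eq_comp_add_right {ψ : G → E} {a : 𝕜} (hψ : ∀ x, ψ (x + t) = a • ψ x)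
    {g : Lp E p (μ.restrict Ω)} (hg : g =ᵐ[μ.restrict Ω] ψ) :
    ⇑(a • g) =ᵐ[(μ.restrict Ω).restrict ((· + t) ⁻¹' Ω)] fun x => g (x + t) := by
  filter_upwards [(Lp.coeFn_smul a g).filter_mono (ae_mono Measure.restrict_le_self),
    hg.filter_mono (ae_mono Measure.restrict_le_self),
    ae_eq_comp_add_right_of_ae_eq_restrict Ω t hg] with x hsmul hx hxt
  rw [hsmul, Pi.smul_apply, hx, hxt, hψ]

end MeasureTheory

theorem spectrum_gives_local_translation_group_general (Ω : Set ℝ) (Λ : Set ℝ)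
    (e : Λ → Lp ℂ 2 (volume.restrict Ω))
    (he : ∀ l : Λ, (e l : ℝ → ℂ) =ᵐ[volume.restrict Ω]
      fun x : ℝ => ((1 / Real.sqrt (volume Ω).toReal : ℝ) : ℂ) *
        Complex.exp (2 * Real.pi * Complex.I * ((l : ℝ) : ℂ) * (x : ℂ)))
    (horth : Orthonormal ℂ e)
    (hdense : (Submodule.span ℂ (Set.range e)).topologicalClosure = ⊤) :
    ∃ U : ℝ → (Lp ℂ 2 (volume.restrict Ω) ≃ₗᵢ[ℂ] Lp ℂ 2 (volume.restrict Ω)),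
      (∀ (t : ℝ) (l : Λ), U t (e l) =
        Complex.exp (2 * Real.pi * Complex.I * ((l : ℝ) : ℂ) * (t : ℂ)) • e l) ∧
      (∀ (s t : ℝ) (f : Lp ℂ 2 (volume.restrict Ω)), U (s + t) f = U s (U t f)) ∧
      (∀ f : Lp ℂ 2 (volume.restrict Ω), U 0 f = f) ∧
      (∀ (f : Lp ℂ 2 (volume.restrict Ω)) (t : ℝ),
        ∀ᵐ x ∂(volume.restrict Ω), x + t ∈ Ω → (U t f : ℝ → ℂ) x = (f : ℝ → ℂ) (x + t)) := by
  set b := HilbertBasis.mk horth hdense.ge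
  let c (t : ℝ) (l : Λ) : Circle := Circle.exp (2 * π * l * t)
  have hc (t : ℝ) (l : Λ) : (c t l : ℂ) = Complex.exp (2 * π * I * l * t) := by
    rw [Circle.coe_exp]; push_cast; ring_nf
  have hU (t : ℝ) (l : Λ) : b.diagonal (c t) (e l) = Complex.exp (2 * π * I * l * t) • e l := by
    rw [← HilbertBasis.coe_mk horth hdense.ge, b.diagonal_apply_self, Circle.smul_def, hc]
  refine ⟨fun t => b.diagonal (c t), hU, fun s t f => ?_, fun f => ?_, fun f t => ?_⟩
  · have hcs : c (s + t) = c s * c t := funext fun l => by simp [c, mul_add, Circle.exp_add]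
    dsimp only
    rw [hcs, map_mul, LinearIsometryEquiv.coe_mul, Function.comp_apply]
  · have hc0 : c 0 = 1 := funext fun l => by simp [c]
    dsimp only
    rw [hc0, map_one, LinearIsometryEquiv.coe_one, id]
  · refine Lp.ae_apply_eq_apply_add_of_dense_span Ω t (b.diagonal (c t)).toContinuousLinearEquiv
      hdense (fun g ⟨l, hl⟩ => ?_) f
    subst hl
    change ⇑(b.diagonal (c t) (e l)) =ᵐ[_] _
    rw [hU]
    refine Lp.coeFn_smul_ae_eq_comp_add_right Ω t (fun x => ?_) (he l)
    simp only [smul_eq_mul, ofReal_add, mul_add, Complex.exp_add]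
    ring

/-- let `Ω ⊂ ℝ` be bounded, measurable, of finite positive measure, and let
`Λ ⊂ ℝ` be such that the functions `|Ω|^{−1/2}·e^{2πiλx}`, `λ ∈ Λ`, form an orthonormal basis
of `L²(Ω)`. Then there is a one-parameter group `U_Λ` of unitary operators on `L²(Ω)` with
`U_Λ(t)e_λ = e^{2πiλt}·e_λ`, and `U_Λ` is a group of local translations:
`(U_Λ(t)f)(x) = f(x+t)` for a.e. `x ∈ Ω ∩ (Ω − t)`. -/
theorem spectrum_gives_local_translation_group (Ω : Set ℝ)
    (hΩb : Bornology.IsBounded Ω) (hΩm : MeasurableSet Ω)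
    (hΩpos : 0 < volume Ω) (Λ : Set ℝ)
    (e : Λ → Lp ℂ 2 (volume.restrict Ω))
    (he : ∀ l : Λ, (e l : ℝ → ℂ) =ᵐ[volume.restrict Ω]
      fun x : ℝ => ((1 / Real.sqrt (volume Ω).toReal : ℝ) : ℂ) *
        Complex.exp (2 * Real.pi * Complex.I * ((l : ℝ) : ℂ) * (x : ℂ)))
    (horth : Orthonormal ℂ e)
    (hdense : (Submodule.span ℂ (Set.range e)).topologicalClosure = ⊤) :
    ∃ U : ℝ → (Lp ℂ 2 (volume.restrict Ω) ≃ₗᵢ[ℂ] Lp ℂ 2 (volume.restrict Ω)),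
      (∀ (t : ℝ) (l : Λ), U t (e l) =
        Complex.exp (2 * Real.pi * Complex.I * ((l : ℝ) : ℂ) * (t : ℂ)) • e l) ∧
      (∀ (s t : ℝ) (f : Lp ℂ 2 (volume.restrict Ω)), U (s + t) f = U s (U t f)) ∧
      (∀ f : Lp ℂ 2 (volume.restrict Ω), U 0 f = f) ∧
      (∀ (f : Lp ℂ 2 (volume.restrict Ω)) (t : ℝ),
        ∀ᵐ x ∂(volume.restrict Ω), x + t ∈ Ω → (U t f : ℝ → ℂ) x = (f : ℝ → ℂ) (x + t)) :=
  spectrum_gives_local_translation_group_general Ω Λ e he horth hdense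
end
end

section
/- Let a be a positive integer, let c_1, c_2, c_3 be odd integers, and set A = {0, 2^a c_1, c_2, c_2 + 2^a c_3} and 𝒯 = {0, 2, 4, …, 2^a − 2}. Then A ⊕ 𝒯 is a complete set of representatives modulo 2^{a+1}: the map A × 𝒯 → ℤ/2^{a+1}ℤ, (α, t) ↦ α + t mod 2^{a+1}, is a bijection. Moreover, the set {m ∈ ℤ : m ≡ α' − α (mod 2^{a+1}) for some α ≠ α' in A} equals {2^a(2m+1) : m ∈ ℤ} ∪ {2^a m + c_2 : m ∈ ℤ} ∪ {2^a m − c_2 : m ∈ ℤ}. -/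
/-! Write `q = 2^a`. Modulo `2q`, the differences of distinct elements of `A` are the residues
`≡ q (mod 2q)` (the differences `±q c₁`, `±q c₃` inside the blocks `{0, q c₁}` and
`c₂ + {0, q c₃}`) and the residues `≡ ±c₂ (mod q)` (the differences across the blocks); this is
`diffResidues q c₂`. A difference of two elements of `𝒯` is even and smaller than `q` in absolute
value, so it lies in none of these classes, and it is `≡ 0 (mod 2q)` only if it is `0`. Hence
`α + t` is injective on `A × 𝒯`, and `|A| |𝒯| = 4 · 2^(a-1) = 2q` makes it a bijection. -/

open Finset

theorem existsUnique_add_zmod_of_sub_modEq {n : ℕ} [NeZero n] {A T : Finset ℤ}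
    (hA : ∀ α ∈ A, ∀ α' ∈ A, ∀ t ∈ T, ∀ t' ∈ T, t - t' ≡ α' - α [ZMOD n] → α = α')
    (hT : ∀ t ∈ T, ∀ t' ∈ T, t ≡ t' [ZMOD n] → t = t')
    (hcard : #A * #T = n) (z : ZMod n) :
    ∃! p : ℤ × ℤ, p.1 ∈ A ∧ p.2 ∈ T ∧ ((p.1 + p.2 : ℤ) : ZMod n) = z := by
  set f : ℤ × ℤ → ZMod n := fun p => ((p.1 + p.2 : ℤ) : ZMod n)
  have hinj : Set.InjOn f ↑(A ×ˢ T) := by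
    rintro ⟨α, t⟩ hp ⟨α', t'⟩ hp' h
    simp only [coe_product, Set.mem_prod, mem_coe] at hp hp'
    have h : α + t ≡ α' + t' [ZMOD n] := (ZMod.intCast_eq_intCast_iff _ _ _).1 h
    obtain rfl := hA α hp.1 α' hp'.1 t hp.2 t' hp'.2
      (Int.modEq_iff_dvd.2 (by convert h.dvd using 1; ring))
    rw [hT t hp.2 t' hp'.2 (h.add_left_cancel' α)]
  have hsurj : (A ×ˢ T).image f = univ :=
    eq_univ_of_card _ (by rw [card_image_of_injOn hinj, card_product, hcard, ZMod.card])
  obtain ⟨p, hp, rfl⟩ := mem_image.1 (hsurj ▸ mem_univ z)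
  refine ⟨p, ⟨(mem_product.1 hp).1, (mem_product.1 hp).2, rfl⟩, ?_⟩
  rintro p' ⟨hp'₁, hp'₂, hp'⟩
  exact hinj (by simp [hp'₁, hp'₂]) hp hp'

theorem even_sub_and_abs_sub_lt {r : ℕ} {t t' : ℤ}
    (ht : t ∈ (range r).image fun m : ℕ => (2 * m : ℤ))
    (ht' : t' ∈ (range r).image fun m : ℕ => (2 * m : ℤ)) :
    Even (t - t') ∧ |t - t'| < 2 * r := by
  obtain ⟨m, hm, rfl⟩ := mem_image.1 ht
  obtain ⟨m', hm', rfl⟩ := mem_image.1 ht'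
  rw [mem_range] at hm hm'
  exact ⟨⟨m - m', by ring⟩, abs_sub_lt_iff.2 ⟨by omega, by omega⟩⟩

namespace SizeFourTiling

def diffResidues (q c : ℤ) : Set ℤ :=
  {m | m ≡ q [ZMOD 2 * q]} ∪ {m | m ≡ c [ZMOD q]} ∪ {m | m ≡ -c [ZMOD q]}

variable {q c m : ℤ}

theorem diffResidues_eq (q c : ℤ) :
    diffResidues q c = {m : ℤ | ∃ k : ℤ, m = q * (2 * k + 1)} ∪
      {m : ℤ | ∃ k : ℤ, m = q * k + c} ∪ {m : ℤ | ∃ k : ℤ, m = q * k - c} := by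
  ext m
  have modEq_iff {n b : ℤ} : m ≡ b [ZMOD n] ↔ ∃ k, m = b + n * k :=
    Int.modEq_comm.trans Int.modEq_iff_add_fac
  simp only [diffResidues, Set.mem_union, Set.mem_ofPred_eq, modEq_iff]
  refine or_congr (or_congr ?_ ?_) ?_ <;> refine exists_congr fun k => ?_ <;> constructor <;>
    intro h <;> linear_combination h

theorem mem_diffResidues_of_modEq {m' : ℤ} (hm : m ∈ diffResidues q c)
    (h : m' ≡ m [ZMOD 2 * q]) : m' ∈ diffResidues q c := by
  rcases hm with (hm | hm) | hm
  · exact .inl (.inl (h.trans hm))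
  · exact .inl (.inr ((h.of_mul_left 2).trans hm))
  · exact .inr ((h.of_mul_left 2).trans hm)

theorem neg_mem_diffResidues (hm : m ∈ diffResidues q c) : -m ∈ diffResidues q c := by
  rcases hm with (hm | hm) | hm
  · exact .inl (.inl (hm.neg.trans (Int.modEq_iff_dvd.2 ⟨1, by ring⟩)))
  · exact .inr hm.neg
  · exact .inl (.inr (by simpa using hm.neg))

theorem mul_modEq_self_of_odd {c' : ℤ} (hc' : Odd c') : q * c' ≡ q [ZMOD 2 * q] := by
  obtain ⟨k, rfl⟩ := hc'
  exact Int.modEq_iff_dvd.2 ⟨-k, by ring⟩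

theorem add_mul_mem_diffResidues (k : ℤ) : c + q * k ∈ diffResidues q c :=
  .inl (.inr (Int.add_mul_emod_self_left c q k))

theorem notMem_diffResidues (hq : Even q) (hc : Odd c) (hm : Even m) (hlt : |m| < q) :
    m ∉ diffResidues q c := by
  have parity {c : ℤ} (hc : Odd c) (h : m ≡ c [ZMOD q]) : False := by
    have h2 : m % 2 = c % 2 := h.of_dvd (even_iff_two_dvd.1 hq)
    rw [Int.even_iff.1 hm, Int.odd_iff.1 hc] at h2
    exact absurd h2 (by decide)
  rintro ((h | h) | h)
  · obtain ⟨k, rfl⟩ := Int.modEq_iff_add_fac.1 h.symm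
    have hk : 1 ≤ |2 * k + 1| := Int.one_le_abs (by omega)
    have hq0 : 0 ≤ q := (abs_nonneg _).trans hlt.le
    rw [show q + 2 * q * k = q * (2 * k + 1) by ring, abs_mul, abs_of_nonneg hq0] at hlt
    nlinarith
  · exact parity hc h
  · exact parity hc.neg h

theorem ne_of_sub_mem_diffResidues (hq : Even q) (hq0 : 0 < q) (hc : Odd c) {α α' : ℤ}
    (h : α' - α ∈ diffResidues q c) : α ≠ α' := by
  rintro rfl
  exact notMem_diffResidues hq hc Even.zero (by simpa using hq0) (by simpa using h)

theorem modEq_or_modEq_add_mul_of_modEq {c' : ℤ} (hc' : Odd c') (h : m ≡ c [ZMOD q]) :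
    m ≡ c [ZMOD 2 * q] ∨ m ≡ c + q * c' [ZMOD 2 * q] := by
  obtain ⟨k, rfl⟩ := Int.modEq_iff_add_fac.1 h.symm
  obtain ⟨e, rfl⟩ := hc'
  rcases k.even_or_odd with ⟨j, rfl⟩ | ⟨j, rfl⟩
  · exact .inl (Int.modEq_iff_dvd.2 ⟨-j, by ring⟩)
  · exact .inr (Int.modEq_iff_dvd.2 ⟨e - j, by ring⟩)

variable {c₁ c₂ c₃ : ℤ}

theorem pairwise_sub_mem_diffResidues (hc₁ : Odd c₁) (hc₃ : Odd c₃) :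
    [0, q * c₁, c₂, c₂ + q * c₃].Pairwise fun α α' => α' - α ∈ diffResidues q c₂ := by
  simp only [List.pairwise_cons, List.mem_cons, List.mem_nil_iff, or_false, forall_eq_or_imp,
    forall_eq, IsEmpty.forall_iff, forall_const, List.Pairwise.nil, and_true, sub_zero,
    add_sub_cancel_left]
  refine ⟨⟨.inl (.inl (mul_modEq_self_of_odd hc₁)),
    by simpa using add_mul_mem_diffResidues (q := q) 0, add_mul_mem_diffResidues c₃⟩, ⟨?_, ?_⟩,
    .inl (.inl (mul_modEq_self_of_odd hc₃))⟩
  · convert add_mul_mem_diffResidues (-c₁) using 1; ring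
  · convert add_mul_mem_diffResidues (c₃ - c₁) using 1; ring

theorem sub_mem_diffResidues_of_mem (hc₁ : Odd c₁) (hc₃ : Odd c₃) {α α' : ℤ}
    (hα : α ∈ ({0, q * c₁, c₂, c₂ + q * c₃} : Finset ℤ))
    (hα' : α' ∈ ({0, q * c₁, c₂, c₂ + q * c₃} : Finset ℤ)) (hne : α ≠ α') :
    α' - α ∈ diffResidues q c₂ :=
  have : Std.Symm fun α α' : ℤ => α' - α ∈ diffResidues q c₂ :=
    ⟨fun _ _ h => by simpa using neg_mem_diffResidues h⟩
  (pairwise_sub_mem_diffResidues hc₁ hc₃).forall (by simpa using hα) (by simpa using hα') hne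

theorem card_eq_four (hq : Even q) (hq0 : 0 < q) (hc₁ : Odd c₁) (hc₂ : Odd c₂) (hc₃ : Odd c₃) :
    #({0, q * c₁, c₂, c₂ + q * c₃} : Finset ℤ) = 4 := by
  have hnodup : [0, q * c₁, c₂, c₂ + q * c₃].Nodup :=
    (pairwise_sub_mem_diffResidues hc₁ hc₃).imp (ne_of_sub_mem_diffResidues hq hq0 hc₂)
  simpa using List.toFinset_card_of_nodup hnodup

theorem setOf_modEq_sub_eq_diffResidues (hq : Even q) (hq0 : 0 < q) (hc₁ : Odd c₁)
    (hc₂ : Odd c₂) (hc₃ : Odd c₃) :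
    {m : ℤ | ∃ α ∈ ({0, q * c₁, c₂, c₂ + q * c₃} : Finset ℤ),
      ∃ α' ∈ ({0, q * c₁, c₂, c₂ + q * c₃} : Finset ℤ), α ≠ α' ∧ m ≡ α' - α [ZMOD 2 * q]} =
      diffResidues q c₂ := by
  set A : Finset ℤ := {0, q * c₁, c₂, c₂ + q * c₃}
  ext m
  refine ⟨fun ⟨α, hα, α', hα', hne, h⟩ =>
    mem_diffResidues_of_modEq (sub_mem_diffResidues_of_mem hc₁ hc₃ hα hα' hne) h, fun hm => ?_⟩
  have witness {α α' : ℤ} (hα : α ∈ A) (hα' : α' ∈ A) (h : m ≡ α' - α [ZMOD 2 * q]) :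
      ∃ α ∈ A, ∃ α' ∈ A, α ≠ α' ∧ m ≡ α' - α [ZMOD 2 * q] :=
    ⟨α, hα, α', hα',
      ne_of_sub_mem_diffResidues hq hq0 hc₂ (mem_diffResidues_of_modEq hm h.symm), h⟩
  rcases hm with (h | h) | h
  · exact witness (α := 0) (α' := q * c₁) (by simp [A]) (by simp [A])
      (by simpa using h.trans (mul_modEq_self_of_odd hc₁).symm)
  · rcases modEq_or_modEq_add_mul_of_modEq hc₃ h with h | h
    · exact witness (α := 0) (α' := c₂) (by simp [A]) (by simp [A]) (by simpa using h)
    · exact witness (α := 0) (α' := c₂ + q * c₃) (by simp [A]) (by simp [A]) (by simpa using h)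
  · rcases modEq_or_modEq_add_mul_of_modEq hc₃.neg h with h | h
    · exact witness (α := c₂) (α' := 0) (by simp [A]) (by simp [A]) (by simpa using h)
    · exact witness (α := c₂ + q * c₃) (α' := 0) (by simp [A]) (by simp [A])
        (by convert h using 2; ring)

end SizeFourTiling

open SizeFourTiling in
/-- for `a ≥ 1` and odd integers `c₁, c₂, c₃`, the set
`A = {0, 2^a c₁, c₂, c₂ + 2^a c₃}` together with `𝒯 = {0, 2, 4, …, 2^a − 2}` satisfies
`A ⊕ 𝒯 = ℤ_{2^{a+1}}` (every residue modulo `2^{a+1}` is `α + t` for exactly one pair), and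
`{m : m ≡ α' − α (mod 2^{a+1}) for some α ≠ α' in A}`
`= {2^a(2m+1) : m ∈ ℤ} ∪ {2^a m + c₂ : m ∈ ℤ} ∪ {2^a m − c₂ : m ∈ ℤ}`. -/
theorem tiling_for_size_four (a : ℕ) (ha : 1 ≤ a) (c₁ c₂ c₃ : ℤ)
    (hc₁ : Odd c₁) (hc₂ : Odd c₂) (hc₃ : Odd c₃)
    (A : Finset ℤ) (hA : A = ({0, 2 ^ a * c₁, c₂, c₂ + 2 ^ a * c₃} : Finset ℤ))
    (T : Finset ℤ) (hT : T = (Finset.range (2 ^ (a - 1))).image (fun m : ℕ => (2 * m : ℤ))) :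
    (∀ z : ZMod (2 ^ (a + 1)), ∃! p : ℤ × ℤ,
      p.1 ∈ A ∧ p.2 ∈ T ∧ ((p.1 + p.2 : ℤ) : ZMod (2 ^ (a + 1))) = z) ∧
    {m : ℤ | ∃ α ∈ A, ∃ α' ∈ A, α ≠ α' ∧ m ≡ α' - α [ZMOD (2 ^ (a + 1) : ℤ)]} =
      {m : ℤ | ∃ k : ℤ, m = 2 ^ a * (2 * k + 1)} ∪
      {m : ℤ | ∃ k : ℤ, m = 2 ^ a * k + c₂} ∪
      {m : ℤ | ∃ k : ℤ, m = 2 ^ a * k - c₂} := by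
  obtain ⟨b, rfl⟩ : ∃ b, a = b + 1 := ⟨a - 1, by omega⟩
  subst hA hT
  have hq : Even ((2 : ℤ) ^ (b + 1)) := Int.even_pow.2 ⟨even_two, by omega⟩
  have hq0 : (0 : ℤ) < 2 ^ (b + 1) := by positivity
  have hN : ((2 ^ (b + 1 + 1) : ℕ) : ℤ) = 2 * 2 ^ (b + 1) := by push_cast; ring
  have hr : 2 * ((2 ^ (b + 1 - 1) : ℕ) : ℤ) = 2 ^ (b + 1) := by push_cast; ring
  refine ⟨existsUnique_add_zmod_of_sub_modEq ?_ ?_ ?_, ?_⟩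
  · intro α hα α' hα' t ht t' ht' h
    by_contra hne
    obtain ⟨heven, hlt⟩ := even_sub_and_abs_sub_lt ht ht'
    exact notMem_diffResidues hq hc₂ heven (hr ▸ hlt)
      (mem_diffResidues_of_modEq (sub_mem_diffResidues_of_mem hc₁ hc₃ hα hα' hne) (hN ▸ h))
  · intro t ht t' ht' h
    have hlt := (even_sub_and_abs_sub_lt ht' ht).2
    exact (sub_eq_zero.1 (Int.eq_zero_of_abs_lt_dvd h.dvd (by omega))).symm
  · rw [card_eq_four hq hq0 hc₁ hc₂ hc₃, card_image_of_injective _ (fun x y h => by simpa using h),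
      card_range, Nat.add_sub_cancel]
    ring
  · rw [show (2 : ℤ) ^ (b + 1 + 1) = 2 * 2 ^ (b + 1) by ring,
      setOf_modEq_sub_eq_diffResidues hq hq0 hc₁ hc₂ hc₃, diffResidues_eq]
end
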